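/- arXiv:2002.10086 — 7 statements merged into one kernel-verified Lean document; each statement's English description precedes it below -/
import Mathlib

section
/- The map Φ sending a plane partition π to the matrix D = (d_{iℓ}) where d_{iℓ} = |{ j : π_{ij} = ℓ > π_{i+1,j} }| is a bijection from the set of plane partitions to the set of matrices of nonnegative integers with finitely many nonzero entries. -/
open scoped BigOperators

/-- A plane partition: an ℕ-matrix (indexed from 0) with finitely many nonzero
entries, weakly decreasing along rows and columns. -/
structure PlanePartition where
  entry : ℕ → ℕ → ℕ
  finite_support : (Function.support fun p : ℕ × ℕ => entry p.1 p.2).Finite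
  row_dec : ∀ i j, entry i (j + 1) ≤ entry i j
  col_dec : ∀ i j, entry (i + 1) j ≤ entry i j

/-- `c_ℓ(π)`: the number of columns of `π` containing the entry `ℓ`. -/
noncomputable def colCount (π : PlanePartition) (ℓ : ℕ) : ℕ :=
  {j | ∃ i, π.entry i j = ℓ}.ncard

/-- `d_{iℓ}`: the number of columns `j` with `π_{ij} = ℓ > π_{i+1,j}` (row `i` indexed from 0,
`ℓ` an actual entry value). -/
noncomputable def dstat (π : PlanePartition) (i ℓ : ℕ) : ℕ :=
  {j | π.entry i j = ℓ ∧ π.entry (i + 1) j < ℓ}.ncard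

/-- `λ_k`: the number of positive entries in row `k` (indexed from 0) of `π`. -/
noncomputable def part (π : PlanePartition) (k : ℕ) : ℕ :=
  {j | 0 < π.entry k j}.ncard

/-- `π` has shape `λ` (with `λ : ℕ → ℕ` indexed from 0). -/
def HasShape (π : PlanePartition) (lam : ℕ → ℕ) : Prop :=
  ∀ k, part π k = lam k

/-- `λ` is an integer partition with at most `m` parts (indexed from 0). -/
def IsPartWithParts (m : ℕ) (lam : ℕ → ℕ) : Prop :=
  Antitone lam ∧ ∀ i, m ≤ i → lam i = 0

/-- The dual Grothendieck polynomial
`g_λ(x_1,…,x_n) = Σ_{π : sh(π) = λ, entries ≤ n} ∏_i x_i^{c_i(π)}`. -/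
noncomputable def dualG (lam : ℕ → ℕ) (n : ℕ) (x : Fin n → ℝ) : ℝ :=
  ∑' π : {π : PlanePartition // HasShape π lam ∧ ∀ i j, π.entry i j ≤ n},
    ∏ ℓ : Fin n, x ℓ ^ colCount π.1 (ℓ.1 + 1)

/-- A unit step of a directed lattice path. -/
def IsStep (a b : ℕ × ℕ) : Prop :=
  b = (a.1 + 1, a.2) ∨ b = (a.1, a.2 + 1)

/-- `p` is a directed lattice path from `s` to `t`. -/
def IsDirPath (p : List (ℕ × ℕ)) (s t : ℕ × ℕ) : Prop :=
  p.head? = some s ∧ p.getLast? = some t ∧ p.Chain' IsStep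

/-- The sum of the weights `W` along the path `p`. -/
def pathSum (W : ℕ → ℕ → ℕ) (p : List (ℕ × ℕ)) : ℕ :=
  (p.map fun a => W a.1 a.2).sum

/-- Last-passage time from `s` to `(m, n)` for the weight matrix `W` (1-indexed). -/
noncomputable def lpt (W : ℕ → ℕ → ℕ) (s : ℕ × ℕ) (m n : ℕ) : ℕ :=
  sSup {v | ∃ p, IsDirPath p s (m, n) ∧ v = pathSum W p}

/-- Extend an `m × n` matrix (indexed from 0) to a 1-indexed matrix on `ℕ × ℕ`, zero outside. -/
def ext (m n : ℕ) (w : Fin m → Fin n → ℕ) : ℕ → ℕ → ℕ := fun i j =>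
  if hi : i - 1 < m then if hj : j - 1 < n then w ⟨i - 1, hi⟩ ⟨j - 1, hj⟩ else 0 else 0

/-- Probability weight of a fixed `m × n` matrix of outcomes under independent geometric
entries: entry in column `ℓ` takes value `k` with probability `(1 - q_ℓ) q_ℓ^k`. -/
noncomputable def geomWt {m n : ℕ} (q : Fin n → ℝ) (w : Fin m → Fin n → ℕ) : ℝ :=
  ∏ i : Fin m, ∏ ℓ : Fin n, (1 - q ℓ) * q ℓ ^ w i ℓ

/-- Probability of an event `E` for an `m × n` matrix of independent geometric entries
with column parameters `q`. -/
noncomputable def geomProb {m n : ℕ} (q : Fin n → ℝ) (E : Set (Fin m → Fin n → ℕ)) : ℝ :=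
  ∑' w : E, geomWt q w.1

/-- The complete homogeneous symmetric polynomial `h_a(x_1,…,x_N)`: the sum of all
monomials of degree `a`. -/
noncomputable def hpoly (a N : ℕ) (x : Fin N → ℝ) : ℝ :=
  ∑ f ∈ Finset.univ.filter (fun f : Fin a → Fin N => ∀ i j, i ≤ j → f i ≤ f j),
    ∏ t, x (f t)

/-- `h` with an integer index, vanishing for negative degrees. -/
noncomputable def hpolyZ (a : ℤ) (N : ℕ) (x : Fin N → ℝ) : ℝ :=
  if 0 ≤ a then hpoly a.toNat N x else 0

/-- The Schur polynomial of `λ` (at most `m` parts) via the Jacobi–Trudi determinant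
`s_λ = det[h_{λ_i - i + j}]_{i,j=1}^m`. -/
noncomputable def schur (lam : ℕ → ℕ) (m N : ℕ) (x : Fin N → ℝ) : ℝ :=
  Matrix.det (Matrix.of fun i j : Fin m =>
    hpolyZ ((lam i.1 : ℤ) - (i.1 + 1) + (j.1 + 1)) N x)

/-- The rectangular partition `(a^m)` as a function `ℕ → ℕ`. -/
def rectPart (a m : ℕ) : ℕ → ℕ := fun k => if k < m then a else 0

namespace Stmt0Aux

lemma ncard_Iio (n : ℕ) : (Set.Iio n).ncard = n := by
  rw [← Finset.coe_Iio, Set.ncard_coe_finset, Nat.card_Iio]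

lemma ncard_Ico (a b : ℕ) : (Set.Ico a b).ncard = b - a := by
  rw [← Finset.coe_Ico, Set.ncard_coe_finset, Nat.card_Ico]

lemma lower_eq_Iio {s : Set ℕ} (hs : s.Finite)
    (hlow : ∀ ⦃a b : ℕ⦄, a ≤ b → b ∈ s → a ∈ s) :
    s = Set.Iio s.ncard := by
  rcases s.eq_empty_or_nonempty with h | h
  · rw [h]; simp only [Set.ncard_empty]; ext x; simp
  · have hne : hs.toFinset.Nonempty := by rwa [Set.Finite.toFinset_nonempty]
    have hmem : hs.toFinset.max' hne ∈ s := by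
      rw [← hs.mem_toFinset]; exact hs.toFinset.max'_mem hne
    have hs' : s = Set.Iic (hs.toFinset.max' hne) := by
      ext x
      constructor
      · intro hx; exact hs.toFinset.le_max' x (hs.mem_toFinset.2 hx)
      · intro hx; exact hlow hx hmem
    have hIic : Set.Iic (hs.toFinset.max' hne) = Set.Iio (hs.toFinset.max' hne + 1) := by
      ext x; simp [Nat.lt_succ_iff]
    rw [hs', hIic, ncard_Iio]

lemma le_of_lt_imp {a b : ℕ} (h : ∀ j, j < a → j < b) : a ≤ b := by
  rcases Nat.eq_zero_or_pos a with h0 | h0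
  · omega
  · have := h (a - 1) (by omega); omega

lemma row_anti (π : PlanePartition) (i : ℕ) : Antitone (π.entry i) :=
  antitone_nat_of_succ_le (π.row_dec i)

lemma col_anti (π : PlanePartition) (j : ℕ) : Antitone fun i => π.entry i j :=
  antitone_nat_of_succ_le fun i => π.col_dec i j

noncomputable def aStat (π : PlanePartition) (i ℓ : ℕ) : ℕ :=
  {j | ℓ + 1 ≤ π.entry i j}.ncard

lemma aSet_finite (π : PlanePartition) (i ℓ : ℕ) : {j | ℓ + 1 ≤ π.entry i j}.Finite := by
  have hsub : {j | ℓ + 1 ≤ π.entry i j} ⊆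
      (fun j : ℕ => ((i, j) : ℕ × ℕ)) ⁻¹' (Function.support fun p : ℕ × ℕ => π.entry p.1 p.2) := by
    intro j hj
    simp only [Set.mem_preimage, Function.mem_support]
    simp only [Set.mem_setOf_eq] at hj
    omega
  exact (π.finite_support.preimage (Function.Injective.injOn (fun a b hab => by
    simpa using hab))).subset hsub

lemma aSet_eq (π : PlanePartition) (i ℓ : ℕ) :
    {j | ℓ + 1 ≤ π.entry i j} = Set.Iio (aStat π i ℓ) :=
  lower_eq_Iio (aSet_finite π i ℓ) fun a b hab hb => le_trans hb (row_anti π i hab)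

lemma mem_aStat (π : PlanePartition) (i ℓ j : ℕ) :
    j < aStat π i ℓ ↔ ℓ + 1 ≤ π.entry i j := by
  rw [← Set.mem_Iio, ← aSet_eq]; rfl

lemma aStat_le_lvl (π : PlanePartition) (i ℓ : ℕ) : aStat π i (ℓ + 1) ≤ aStat π i ℓ :=
  le_of_lt_imp fun j hj => by
    rw [mem_aStat] at hj ⊢; omega

lemma aStat_le_row (π : PlanePartition) (i ℓ : ℕ) : aStat π (i + 1) ℓ ≤ aStat π i ℓ :=
  le_of_lt_imp fun j hj => by
    rw [mem_aStat] at hj ⊢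
    exact le_trans hj (π.col_dec i j)

lemma aStat_rec (π : PlanePartition) (i ℓ : ℕ) :
    aStat π i ℓ = dstat π i (ℓ + 1) + max (aStat π i (ℓ + 1)) (aStat π (i + 1) ℓ) := by
  have hset : {j | π.entry i j = ℓ + 1 ∧ π.entry (i + 1) j < ℓ + 1}
      = Set.Ico (max (aStat π i (ℓ + 1)) (aStat π (i + 1) ℓ)) (aStat π i ℓ) := by
    ext j
    have h1 := mem_aStat π i ℓ j
    have h2 := mem_aStat π i (ℓ + 1) j
    have h3 := mem_aStat π (i + 1) ℓ j
    simp only [Set.mem_setOf_eq, Set.mem_Ico, max_le_iff]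
    omega
  have hM : max (aStat π i (ℓ + 1)) (aStat π (i + 1) ℓ) ≤ aStat π i ℓ :=
    max_le (aStat_le_lvl π i ℓ) (aStat_le_row π i ℓ)
  have := congrArg Set.ncard hset
  rw [ncard_Ico] at this
  unfold dstat
  omega

lemma aStat_vanish (π : PlanePartition) :
    ∃ N, ∀ i ℓ, N ≤ i ∨ N ≤ ℓ → aStat π i ℓ = 0 := by
  classical
  refine ⟨max (π.finite_support.toFinset.sup fun p => p.1 + 1)
      (π.finite_support.toFinset.sup fun p => π.entry p.1 p.2), fun i ℓ h => ?_⟩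
  rw [aStat, Set.ncard_eq_zero (aSet_finite π i ℓ)]
  rw [Set.eq_empty_iff_forall_notMem]
  intro j hj
  simp only [Set.mem_setOf_eq] at hj
  have hmem : (i, j) ∈ π.finite_support.toFinset := by
    rw [Set.Finite.mem_toFinset, Function.mem_support]
    simp only []
    omega
  have h1 := Finset.le_sup (f := fun p : ℕ × ℕ => p.1 + 1) hmem
  have h2 := Finset.le_sup (f := fun p : ℕ × ℕ => π.entry p.1 p.2) hmem
  simp only [] at h1 h2
  omega

lemma entry_eq (π : PlanePartition) (i j : ℕ) :
    Set.Iio (π.entry i j) = {ℓ | j < aStat π i ℓ} := by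
  ext ℓ
  rw [Set.mem_Iio, Set.mem_setOf_eq, mem_aStat]
  omega

lemma inj_aux {π π' : PlanePartition}
    (h : ∀ i ℓ, dstat π i (ℓ + 1) = dstat π' i (ℓ + 1)) : π = π' := by
  obtain ⟨N1, h1⟩ := aStat_vanish π
  obtain ⟨N2, h2⟩ := aStat_vanish π'
  have key : ∀ k i ℓ, 2 * (max N1 N2) ≤ k + i + ℓ → aStat π i ℓ = aStat π' i ℓ := by
    intro k
    induction k with
    | zero =>
      intro i ℓ hk
      rw [h1 i ℓ (by omega), h2 i ℓ (by omega)]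
    | succ k ih =>
      intro i ℓ hk
      by_cases hc : max N1 N2 ≤ i ∨ max N1 N2 ≤ ℓ
      · rw [h1 i ℓ (by omega), h2 i ℓ (by omega)]
      · push_neg at hc
        rw [aStat_rec π i ℓ, aStat_rec π' i ℓ, h i ℓ, ih i (ℓ + 1) (by omega), ih (i + 1) ℓ (by omega)]
  have haS : ∀ i ℓ, aStat π i ℓ = aStat π' i ℓ := fun i ℓ =>
    key (2 * max N1 N2) i ℓ (by omega)
  have hE : ∀ i j, π.entry i j = π'.entry i j := by
    intro i j
    have hs : Set.Iio (π.entry i j) = Set.Iio (π'.entry i j) := by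
      rw [entry_eq, entry_eq]
      ext ℓ
      simp only [Set.mem_setOf_eq, haS]
    have := congrArg Set.ncard hs
    rwa [ncard_Iio, ncard_Iio] at this
  obtain ⟨e, f, r, c⟩ := π
  obtain ⟨e', f', r', c'⟩ := π'
  have : e = e' := funext fun i => funext fun j => hE i j
  subst this
  rfl

def fAux (D : ℕ → ℕ → ℕ) : ℕ → ℕ → ℕ → ℕ
  | 0, _, _ => 0
  | k + 1, i, ℓ => D i ℓ + max (fAux D k i (ℓ + 1)) (fAux D k (i + 1) ℓ)

lemma fAux_zero {D : ℕ → ℕ → ℕ} {N : ℕ} (hD : ∀ i ℓ, N ≤ i ∨ N ≤ ℓ → D i ℓ = 0) :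
    ∀ k i ℓ, N ≤ i ∨ N ≤ ℓ → fAux D k i ℓ = 0 := by
  intro k
  induction k with
  | zero => intro i ℓ _; rfl
  | succ k ih =>
    intro i ℓ h
    show D i ℓ + _ = 0
    rw [hD i ℓ h, ih i (ℓ + 1) (by omega), ih (i + 1) ℓ (by omega)]
    simp

lemma fAux_stab {D : ℕ → ℕ → ℕ} {N : ℕ} (hD : ∀ i ℓ, N ≤ i ∨ N ≤ ℓ → D i ℓ = 0) :
    ∀ k i ℓ, 2 * N ≤ k + i + ℓ → fAux D (k + 1) i ℓ = fAux D k i ℓ := by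
  intro k
  induction k with
  | zero =>
    intro i ℓ h
    rw [fAux_zero hD 1 i ℓ (by omega), fAux_zero hD 0 i ℓ (by omega)]
  | succ k ih =>
    intro i ℓ h
    show D i ℓ + max (fAux D (k + 1) i (ℓ + 1)) (fAux D (k + 1) (i + 1) ℓ)
        = D i ℓ + max (fAux D k i (ℓ + 1)) (fAux D k (i + 1) ℓ)
    rw [ih i (ℓ + 1) (by omega), ih (i + 1) ℓ (by omega)]

end Stmt0Aux

namespace Stmt0Aux

lemma surj_aux (D : ℕ → ℕ → ℕ)
    (hfin : (Function.support fun p : ℕ × ℕ => D p.1 p.2).Finite) :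
    ∃ π : PlanePartition, ∀ i ℓ, dstat π i (ℓ + 1) = D i ℓ := by
  classical
  set N : ℕ := max (hfin.toFinset.sup fun p => p.1 + 1)
      (hfin.toFinset.sup fun p => p.2 + 1) with hNdef
  have hD : ∀ i ℓ, N ≤ i ∨ N ≤ ℓ → D i ℓ = 0 := by
    intro i ℓ h
    by_contra hne
    have hmem : (i, ℓ) ∈ hfin.toFinset := by
      rw [Set.Finite.mem_toFinset, Function.mem_support]; exact hne
    have h1 := Finset.le_sup (f := fun p : ℕ × ℕ => p.1 + 1) hmem
    have h2 := Finset.le_sup (f := fun p : ℕ × ℕ => p.2 + 1) hmem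
    simp only [] at h1 h2
    omega
  set a : ℕ → ℕ → ℕ := fAux D (2 * N) with ha
  have ha_rec : ∀ i ℓ, a i ℓ = D i ℓ + max (a i (ℓ + 1)) (a (i + 1) ℓ) := by
    intro i ℓ
    have h := fAux_stab hD (2 * N) i ℓ (by omega)
    rw [ha, ← h]
    rfl
  have ha0 : ∀ i ℓ, N ≤ i ∨ N ≤ ℓ → a i ℓ = 0 := fun i ℓ h =>
    fAux_zero hD (2 * N) i ℓ h
  have ha_lvl : ∀ i ℓ, a i (ℓ + 1) ≤ a i ℓ := by
    intro i ℓ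
    have h1 := le_max_left (a i (ℓ + 1)) (a (i + 1) ℓ)
    have h2 := ha_rec i ℓ
    omega
  have ha_row : ∀ i ℓ, a (i + 1) ℓ ≤ a i ℓ := by
    intro i ℓ
    have h1 := le_max_right (a i (ℓ + 1)) (a (i + 1) ℓ)
    have h2 := ha_rec i ℓ
    omega
  have hSfin : ∀ i j, {ℓ | j < a i ℓ}.Finite := by
    intro i j
    apply (Set.finite_Iio N).subset
    intro ℓ hℓ
    simp only [Set.mem_setOf_eq] at hℓ
    simp only [Set.mem_Iio]
    by_contra hb; push_neg at hb; rw [ha0 i ℓ (Or.inr hb)] at hℓ; omega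
  have hSlow : ∀ i j, {ℓ | j < a i ℓ} = Set.Iio {ℓ | j < a i ℓ}.ncard := by
    intro i j
    apply lower_eq_Iio (hSfin i j)
    intro x y hxy hy
    simp only [Set.mem_setOf_eq] at hy ⊢
    have : a i y ≤ a i x := antitone_nat_of_succ_le (ha_lvl i) hxy
    omega
  set E : ℕ → ℕ → ℕ := fun i j => {ℓ | j < a i ℓ}.ncard with hE
  have hmemE : ∀ i j ℓ, ℓ < E i j ↔ j < a i ℓ := by
    intro i j ℓ
    rw [hE]
    rw [← Set.mem_Iio, ← hSlow i j]
    exact Iff.rfl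
  have hEfin : (Function.support fun p : ℕ × ℕ => E p.1 p.2).Finite := by
    apply ((Set.finite_Iio N).prod (Set.finite_Iio (a 0 0))).subset
    intro p hp
    rw [Function.mem_support] at hp
    have hne : {ℓ | p.2 < a p.1 ℓ}.Nonempty := Set.nonempty_of_ncard_ne_zero hp
    obtain ⟨ℓ, hℓ⟩ := hne
    simp only [Set.mem_setOf_eq] at hℓ
    have hle1 : a p.1 ℓ ≤ a p.1 0 := antitone_nat_of_succ_le (ha_lvl p.1) (Nat.zero_le ℓ)
    have hle2 : a p.1 0 ≤ a 0 0 :=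
      (antitone_nat_of_succ_le (f := fun i => a i 0) fun i => ha_row i 0) (Nat.zero_le p.1)
    have h1 : p.1 < N := by
      by_contra hb; push_neg at hb; rw [ha0 p.1 ℓ (Or.inl hb)] at hℓ; omega
    exact ⟨Set.mem_Iio.2 h1, Set.mem_Iio.2 (by omega)⟩
  have hErow : ∀ i j, E i (j + 1) ≤ E i j := by
    intro i j
    apply Set.ncard_le_ncard _ (hSfin i j)
    intro ℓ hℓ
    simp only [Set.mem_setOf_eq] at hℓ ⊢; omega
  have hEcol : ∀ i j, E (i + 1) j ≤ E i j := by
    intro i j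
    apply Set.ncard_le_ncard _ (hSfin i j)
    intro ℓ hℓ
    simp only [Set.mem_setOf_eq] at hℓ ⊢
    have := ha_row i ℓ; omega
  refine ⟨⟨E, hEfin, hErow, hEcol⟩, ?_⟩
  have hAS : ∀ i ℓ, aStat ⟨E, hEfin, hErow, hEcol⟩ i ℓ = a i ℓ := by
    intro i ℓ
    show {j | ℓ + 1 ≤ E i j}.ncard = a i ℓ
    have hset : {j | ℓ + 1 ≤ E i j} = Set.Iio (a i ℓ) := by
      ext j
      simp only [Set.mem_setOf_eq, Set.mem_Iio]
      rw [← hmemE i j ℓ]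
      omega
    rw [hset, ncard_Iio]
  intro i ℓ
  have hrec := aStat_rec ⟨E, hEfin, hErow, hEcol⟩ i ℓ
  rw [hAS i ℓ, hAS i (ℓ + 1), hAS (i + 1) ℓ] at hrec
  have h2 := ha_rec i ℓ
  omega

end Stmt0Aux


/-- the descent-level-set map `Φ`, sending a plane partition `π` to the
matrix `D = (d_{iℓ})` (rows indexed from 0, levels `ℓ ≥ 1` shifted to index from 0),
is a bijection onto the set of ℕ-matrices with finitely many nonzero entries. -/
theorem stmt0 :
    Set.BijOn (fun (π : PlanePartition) => fun i ℓ : ℕ => dstat π i (ℓ + 1))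
      Set.univ
      {D : ℕ → ℕ → ℕ | (Function.support fun p : ℕ × ℕ => D p.1 p.2).Finite} := by
  refine ⟨?_, ?_, ?_⟩
  · -- MapsTo
    intro π _
    simp only [Set.mem_setOf_eq]
    obtain ⟨N, hN⟩ := Stmt0Aux.aStat_vanish π
    apply ((Set.finite_Iio N).prod (Set.finite_Iio N)).subset
    intro p hp
    rw [Function.mem_support] at hp
    have hne : {j | π.entry p.1 j = p.2 + 1 ∧ π.entry (p.1 + 1) j < p.2 + 1}.Nonempty :=
      Set.nonempty_of_ncard_ne_zero hp
    obtain ⟨j, hj1, hj2⟩ := hne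
    have hj : j < Stmt0Aux.aStat π p.1 p.2 := (Stmt0Aux.mem_aStat π p.1 p.2 j).2 (by omega)
    have h1 : p.1 < N := by
      by_contra hb; push_neg at hb; rw [hN p.1 p.2 (Or.inl hb)] at hj; omega
    have h2 : p.2 < N := by
      by_contra hb; push_neg at hb; rw [hN p.1 p.2 (Or.inr hb)] at hj; omega
    exact ⟨Set.mem_Iio.2 h1, Set.mem_Iio.2 h2⟩
  · -- InjOn
    intro π _ π' _ hfe
    exact Stmt0Aux.inj_aux fun i ℓ => congrFun (congrFun hfe i) ℓ
  · -- SurjOn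
    intro D hDfin
    simp only [Set.mem_setOf_eq] at hDfin
    obtain ⟨π, hπ⟩ := Stmt0Aux.surj_aux D hDfin
    exact ⟨π, Set.mem_univ _, funext fun i => funext fun ℓ => hπ i ℓ⟩
end

section
/- Let π be a plane partition with at most m rows and largest entry at most n, with shape λ = sh(π), and let D = (d_{iℓ}) be the image of π under the descent-level-set map, i.e. d_{iℓ} = |{ j : π_{ij} = ℓ > π_{i+1,j} }|. Then for every k ∈ [1,m], λ_k equals the maximum over directed lattice paths Π from (k,1) to (m,n) (using steps (i,ℓ) → (i+1,ℓ) or (i,ℓ+1)) of the sum of d_{iℓ} over the points (i,ℓ) ∈ Π. -/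
open scoped BigOperators

/-!
Write `N(i, ℓ)` (`countGE`) for the number of entries `≥ ℓ` in row `i` of `π`. For `ℓ ≥ 1` the
columns with `π_{ij} ≥ ℓ` split into the descents counted by `d_{iℓ}` and the union of
`{j | π_{i+1,j} ≥ ℓ}` and `{j | π_{ij} ≥ ℓ + 1}`. Since rows decrease, both are initial segments,
so the union has the larger of the two sizes, which is the last-passage recursion
`N(i, ℓ) = d_{iℓ} + max (N(i + 1, ℓ), N(i, ℓ + 1))`, with `N = 0` below row `m` and above `n`.
Any solution of the recursion with these boundary values is the last-passage time: it bounds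
every path sum step by step, and the path that always moves towards the larger neighbour
attains it. At the start it is `N(k - 1, 1) = λ_k` (rows of `π` are indexed from 0, path
points from 1).
-/

section LastPassage

variable {W : ℕ → ℕ → ℕ} {N : ℕ × ℕ → ℕ}

theorem pathSum_cons (W : ℕ → ℕ → ℕ) (a : ℕ × ℕ) (p : List (ℕ × ℕ)) :
    pathSum W (a :: p) = W a.1 a.2 + pathSum W p := by
  simp [pathSum]

theorem IsDirPath.exists_eq_cons {p : List (ℕ × ℕ)} {s t : ℕ × ℕ} (h : IsDirPath p s t) :
    ∃ q, p = s :: q := by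
  obtain ⟨hhead, -, -⟩ := h
  cases p with
  | nil => simp at hhead
  | cons a q => exact ⟨q, by simpa using hhead⟩

theorem IsDirPath.cons {p : List (ℕ × ℕ)} {a b t : ℕ × ℕ} (hab : IsStep a b)
    (hp : IsDirPath p b t) : IsDirPath (a :: p) a t := by
  obtain ⟨q, rfl⟩ := hp.exists_eq_cons
  obtain ⟨-, hlast, hchain⟩ := hp
  exact ⟨rfl, by rwa [List.getLast?_cons_cons], List.IsChain.cons_cons hab hchain⟩

theorem pathSum_le_of_isChain (P : ℕ × ℕ → Prop) (hP : ∀ a b, IsStep a b → P a → P b)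
    (hsuper : ∀ a, P a → W a.1 a.2 + max (N (a.1 + 1, a.2)) (N (a.1, a.2 + 1)) ≤ N a) :
    ∀ {s : ℕ × ℕ} {q : List (ℕ × ℕ)}, (s :: q).IsChain IsStep → P s →
      pathSum W (s :: q) ≤ N s
  | s, [], _, hs => by
    have := hsuper s hs
    rw [pathSum_cons, show pathSum W [] = 0 from rfl]
    omega
  | s, b :: q, hchain, hs => by
    obtain ⟨hsb, hchain⟩ := List.isChain_cons_cons.mp hchain
    have hb := pathSum_le_of_isChain P hP hsuper hchain (hP s b hsb hs)
    have hsN := hsuper s hs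
    rw [pathSum_cons]
    rcases hsb with rfl | rfl <;> omega

theorem exists_isDirPath_le_pathSum (P : ℕ × ℕ → Prop) {t : ℕ × ℕ}
    (hP : ∀ a b, IsStep a b → P a → P b)
    (hsub : ∀ a, P a → N a ≤ W a.1 a.2 + max (N (a.1 + 1, a.2)) (N (a.1, a.2 + 1)))
    (hdown : ∀ ℓ, P (t.1 + 1, ℓ) → N (t.1 + 1, ℓ) = 0)
    (hright : ∀ i, P (i, t.2 + 1) → N (i, t.2 + 1) = 0)
    {s : ℕ × ℕ} (hs : P s) (h1 : s.1 ≤ t.1) (h2 : s.2 ≤ t.2) :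
    ∃ p, IsDirPath p s t ∧ N s ≤ pathSum W p := by
  induction hd : t.1 - s.1 + (t.2 - s.2) generalizing s with
  | zero =>
    obtain rfl : s = t := Prod.ext (by omega) (by omega)
    have := hsub s hs
    rw [hdown _ (hP _ _ (Or.inl rfl) hs), hright _ (hP _ _ (Or.inr rfl) hs)] at this
    exact ⟨[s], ⟨rfl, rfl, List.IsChain.singleton s⟩, by simpa [pathSum] using this⟩
  | succ d ih =>
    have hrec := hsub s hs
    have hdown0 : s.1 = t.1 → N (s.1 + 1, s.2) = 0 := fun h => by
      have hPd := hP _ _ (Or.inl rfl) hs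
      rw [h] at hPd ⊢
      exact hdown _ hPd
    have hright0 : s.2 = t.2 → N (s.1, s.2 + 1) = 0 := fun h => by
      have hPr := hP _ _ (Or.inr rfl) hs
      rw [h] at hPr ⊢
      exact hright _ hPr
    obtain ⟨b, hsb, hb1, hb2, hNs⟩ : ∃ b, IsStep s b ∧ b.1 ≤ t.1 ∧ b.2 ≤ t.2 ∧
        N s ≤ W s.1 s.2 + N b := by
      by_cases hgo : s.1 < t.1 ∧ N (s.1, s.2 + 1) ≤ N (s.1 + 1, s.2)
      · exact ⟨_, Or.inl rfl, hgo.1, h2, by omega⟩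
      · exact ⟨_, Or.inr rfl, h1, by omega, by omega⟩
    have hbd : t.1 - b.1 + (t.2 - b.2) = d := by
      rcases hsb with rfl | rfl <;> simp only at hb1 hb2 ⊢ <;> omega
    obtain ⟨p, hp, hNb⟩ := ih (hP s b hsb hs) hb1 hb2 hbd
    exact ⟨s :: p, hp.cons hsb, by rw [pathSum_cons]; omega⟩

end LastPassage

theorem Set.ncard_union_eq_max_of_isLowerSet {α : Type*} [LinearOrder α] {s t : Set α}
    (hs : IsLowerSet s) (ht : IsLowerSet t) (hsf : s.Finite) (htf : t.Finite) :
    (s ∪ t).ncard = max s.ncard t.ncard := by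
  rcases hs.total ht with h | h
  · rw [Set.union_eq_right.mpr h, max_eq_right (Set.ncard_le_ncard h htf)]
  · rw [Set.union_eq_left.mpr h, max_eq_left (Set.ncard_le_ncard h hsf)]

namespace PlanePartition

noncomputable def countGE (π : PlanePartition) (i ℓ : ℕ) : ℕ :=
  {j | ℓ ≤ π.entry i j}.ncard

variable (π : PlanePartition)

theorem finite_setOf_le_entry (i : ℕ) {ℓ : ℕ} (hℓ : 1 ≤ ℓ) : {j | ℓ ≤ π.entry i j}.Finite :=
  (π.finite_support.image Prod.snd).subset fun j hj =>
    ⟨(i, j), show π.entry i j ≠ 0 by simp only [Set.mem_ofPred_eq] at hj; omega, rfl⟩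

theorem isLowerSet_setOf_le_entry (i ℓ : ℕ) : IsLowerSet {j | ℓ ≤ π.entry i j} :=
  fun _ _ hba ha => ha.trans (antitone_nat_of_succ_le (π.row_dec i) hba)

theorem countGE_eq_zero_of_le_row {m : ℕ} (hrows : ∀ i j, m ≤ i → π.entry i j = 0)
    {i ℓ : ℕ} (hi : m ≤ i) (hℓ : 1 ≤ ℓ) : π.countGE i ℓ = 0 := by
  rw [countGE, Set.eq_empty_of_forall_notMem (s := {j | ℓ ≤ π.entry i j}) fun j hj => by
    rw [Set.mem_ofPred_eq, hrows i j hi] at hj; omega, Set.ncard_empty]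

theorem countGE_eq_zero_of_lt {n : ℕ} (hent : ∀ i j, π.entry i j ≤ n)
    {i ℓ : ℕ} (hℓ : n < ℓ) : π.countGE i ℓ = 0 := by
  rw [countGE, Set.eq_empty_of_forall_notMem (s := {j | ℓ ≤ π.entry i j}) fun j hj =>
    absurd (hent i j) (by rw [Set.mem_ofPred_eq] at hj; omega), Set.ncard_empty]

theorem countGE_eq_dstat_add_max (i : ℕ) {ℓ : ℕ} (hℓ : 1 ≤ ℓ) :
    π.countGE i ℓ = dstat π i ℓ + max (π.countGE (i + 1) ℓ) (π.countGE i (ℓ + 1)) := by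
  have hsplit : {j | ℓ ≤ π.entry i j} = {j | π.entry i j = ℓ ∧ π.entry (i + 1) j < ℓ} ∪
      ({j | ℓ ≤ π.entry (i + 1) j} ∪ {j | ℓ + 1 ≤ π.entry i j}) := by
    ext j
    have := π.col_dec i j
    simp only [Set.mem_ofPred_eq, Set.mem_union]
    omega
  have hdisj : Disjoint {j | π.entry i j = ℓ ∧ π.entry (i + 1) j < ℓ}
      ({j | ℓ ≤ π.entry (i + 1) j} ∪ {j | ℓ + 1 ≤ π.entry i j}) := by
    rw [Set.disjoint_left]
    simp only [Set.mem_ofPred_eq, Set.mem_union]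
    omega
  have hdown := π.finite_setOf_le_entry (i + 1) hℓ
  have hright := π.finite_setOf_le_entry i (ℓ := ℓ + 1) (by omega)
  have hdesc : {j | π.entry i j = ℓ ∧ π.entry (i + 1) j < ℓ}.Finite :=
    (π.finite_setOf_le_entry i hℓ).subset fun j hj => hj.1.ge
  rw [countGE, hsplit, Set.ncard_union_eq hdisj hdesc (hdown.union hright),
    Set.ncard_union_eq_max_of_isLowerSet (π.isLowerSet_setOf_le_entry _ _)
      (π.isLowerSet_setOf_le_entry _ _) hdown hright]
  rfl

theorem countGE_pred_eq_dstat_add_max {a : ℕ × ℕ} (h1 : 1 ≤ a.1) (h2 : 1 ≤ a.2) :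
    π.countGE (a.1 - 1) a.2 = dstat π (a.1 - 1) a.2 +
      max (π.countGE (a.1 + 1 - 1) a.2) (π.countGE (a.1 - 1) (a.2 + 1)) := by
  rw [π.countGE_eq_dstat_add_max _ h2, Nat.sub_add_cancel h1, Nat.add_sub_cancel]

theorem pathSum_dstat_le_countGE {p : List (ℕ × ℕ)} {s t : ℕ × ℕ} (hp : IsDirPath p s t)
    (hs1 : 1 ≤ s.1) (hs2 : 1 ≤ s.2) :
    pathSum (fun i ℓ => dstat π (i - 1) ℓ) p ≤ π.countGE (s.1 - 1) s.2 := by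
  obtain ⟨q, rfl⟩ := hp.exists_eq_cons
  refine pathSum_le_of_isChain (N := fun a => π.countGE (a.1 - 1) a.2)
    (fun a => 1 ≤ a.1 ∧ 1 ≤ a.2) ?_ ?_ hp.2.2 ⟨hs1, hs2⟩
  · rintro a b (rfl | rfl) ⟨h1, h2⟩ <;> exact ⟨by simp only; omega, by simp only; omega⟩
  · exact fun a ha => (π.countGE_pred_eq_dstat_add_max ha.1 ha.2).ge

theorem exists_isDirPath_countGE_le_pathSum {m n : ℕ}
    (hrows : ∀ i j, m ≤ i → π.entry i j = 0) (hent : ∀ i j, π.entry i j ≤ n)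
    {s : ℕ × ℕ} (hs1 : 1 ≤ s.1) (hs2 : 1 ≤ s.2) (hsm : s.1 ≤ m) (hsn : s.2 ≤ n) :
    ∃ p, IsDirPath p s (m, n) ∧
      π.countGE (s.1 - 1) s.2 ≤ pathSum (fun i ℓ => dstat π (i - 1) ℓ) p := by
  refine exists_isDirPath_le_pathSum (N := fun a => π.countGE (a.1 - 1) a.2) (t := (m, n))
    (fun a => 1 ≤ a.1 ∧ 1 ≤ a.2) ?_ ?_ ?_ ?_ ⟨hs1, hs2⟩ hsm hsn
  · rintro a b (rfl | rfl) ⟨h1, h2⟩ <;> exact ⟨by simp only; omega, by simp only; omega⟩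
  · exact fun a ha => (π.countGE_pred_eq_dstat_add_max ha.1 ha.2).le
  · exact fun ℓ hℓ => π.countGE_eq_zero_of_le_row hrows (Nat.add_sub_cancel m 1).ge hℓ.2
  · exact fun i _ => π.countGE_eq_zero_of_lt hent (Nat.lt_succ_self n)

end PlanePartition

/-- for `π` a plane partition with at most `m` rows, entries at most `n`,
of shape `λ`, and any `k ∈ [1, m]`, `λ_k` is the maximum over directed paths from
`(k, 1)` to `(m, n)` of the sum of `d_{iℓ}` along the path (1-indexed coordinates). -/
theorem stmt2 (π : PlanePartition) (m n : ℕ) (lam : ℕ → ℕ)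
    (hrows : ∀ i j, m ≤ i → π.entry i j = 0)
    (hent : ∀ i j, π.entry i j ≤ n)
    (hshape : HasShape π lam)
    (k : ℕ) (hk1 : 1 ≤ k) (hkm : k ≤ m) :
    lam (k - 1) =
      sSup {v | ∃ p, IsDirPath p (k, 1) (m, n) ∧
        v = pathSum (fun i ℓ => dstat π (i - 1) ℓ) p} := by
  have hlam : lam (k - 1) = π.countGE (k - 1) 1 := (hshape (k - 1)).symm
  have hub : ∀ v ∈ {v | ∃ p, IsDirPath p (k, 1) (m, n) ∧
      v = pathSum (fun i ℓ => dstat π (i - 1) ℓ) p}, v ≤ π.countGE (k - 1) 1 := by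
    rintro v ⟨p, hp, rfl⟩
    exact π.pathSum_dstat_le_countGE hp hk1 le_rfl
  rw [hlam]
  refine le_antisymm ?_ (csSup_le' hub)
  rcases Nat.eq_zero_or_pos n with rfl | hn
  · rw [π.countGE_eq_zero_of_lt hent one_pos]
    exact Nat.zero_le _
  · obtain ⟨p, hp, hle⟩ := π.exists_isDirPath_countGE_le_pathSum hrows hent
      (s := (k, 1)) hk1 le_rfl hkm hn
    exact le_csSup_of_le ⟨_, hub⟩ ⟨p, hp, rfl⟩ hle
end

section
/- For a directed path Π from (k,1) to (m,n) in the lattice, the descent level sets D_{iℓ} = { j : π_{ij} = ℓ > π_{i+1,j} } for (i,ℓ) ∈ Π are pairwise disjoint, and consequently the sum of d_{iℓ} = |D_{iℓ}| over (i,ℓ) ∈ Π is at most λ_k, the number of positive entries in row k of π. -/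
open scoped BigOperators

/-!
The points of a directed path increase strictly in the product order. If `(i, ℓ) < (i', ℓ')`,
a column in both descent sets would either carry two values `ℓ ≠ ℓ'` in the same cell
(`i = i'`), or satisfy `ℓ' = π_{i'j} ≤ π_{i+1,j} < ℓ ≤ ℓ'` (`i < i'`). Every `D_{iℓ}` with
`i ≥ k` lies in the support of row `k`, because `π_{kj} ≥ π_{ij} = ℓ > π_{i+1,j} ≥ 0`, so
the disjoint sets have total size at most `λ_k`.
-/

theorem Set.sum_map_ncard_le_of_pairwise_disjoint {α β : Type*} (f : α → Set β) :
    ∀ (l : List α) {S : Set β}, S.Finite → (∀ a ∈ l, f a ⊆ S) →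
      l.Pairwise (fun a b => Disjoint (f a) (f b)) →
      (l.map fun a => (f a).ncard).sum ≤ S.ncard
  | [], _, _, _, _ => by simp
  | a :: l, S, hS, hsub, hpw => by
    obtain ⟨hdisj, hpw⟩ := List.pairwise_cons.mp hpw
    have hrest : ∀ b ∈ l, f b ⊆ S \ f a := fun b hb =>
      Set.subset_sdiff.mpr ⟨hsub b (List.mem_cons_of_mem _ hb), (hdisj b hb).symm⟩
    have ih := sum_map_ncard_le_of_pairwise_disjoint f l hS.sdiff hrest hpw
    have hsplit := Set.ncard_sdiff_add_ncard_of_subset (hsub a List.mem_cons_self) hS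
    simp only [List.map_cons, List.sum_cons]
    omega

theorem IsStep.lt {a b : ℕ × ℕ} (h : IsStep a b) : a < b := by
  rcases h with rfl | rfl <;> simp [Prod.lt_iff]

theorem IsDirPath.pairwise_lt {p : List (ℕ × ℕ)} {s t : ℕ × ℕ} (hp : IsDirPath p s t) :
    p.Pairwise (· < ·) :=
  List.isChain_iff_pairwise.mp (hp.2.2.imp fun _ _ => IsStep.lt)

theorem IsDirPath.le_of_mem {p : List (ℕ × ℕ)} {s t a : ℕ × ℕ} (hp : IsDirPath p s t)
    (ha : a ∈ p) : s ≤ a := by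
  obtain ⟨l, rfl⟩ := List.head?_eq_some_iff.mp hp.1
  rcases List.mem_cons.mp ha with rfl | ha
  · exact le_rfl
  · exact (List.pairwise_cons.mp hp.pairwise_lt).1 a ha |>.le

namespace PlanePartition

variable (π : PlanePartition)

theorem entry_antitone_row (j : ℕ) : Antitone fun i => π.entry i j :=
  antitone_nat_of_succ_le fun i => π.col_dec i j

theorem finite_setOf_entry_pos (i : ℕ) : {j | 0 < π.entry i j}.Finite :=
  (π.finite_support.preimage fun _ _ _ _ h => (Prod.mk.inj h).2).subset
    fun _ hj => Function.mem_support.mpr hj.ne'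

/-- `D_{iℓ}` with the row `i` indexed from 1, as in the path coordinates. -/
def descentSet (i ℓ : ℕ) : Set ℕ :=
  {j | π.entry (i - 1) j = ℓ ∧ π.entry i j < ℓ}

theorem ncard_descentSet {i : ℕ} (hi : 1 ≤ i) (ℓ : ℕ) :
    (π.descentSet i ℓ).ncard = dstat π (i - 1) ℓ := by
  rw [dstat, Nat.sub_add_cancel hi, descentSet]

theorem disjoint_descentSet_of_lt {a b : ℕ × ℕ} (h : a < b) :
    Disjoint (π.descentSet a.1 a.2) (π.descentSet b.1 b.2) := by
  refine Set.disjoint_left.mpr fun j ⟨ha, ha'⟩ ⟨hb, hb'⟩ => ?_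
  rcases h.le.1.eq_or_lt with hrow | hrow
  · have : a.2 ≠ b.2 := fun hcol => h.ne (Prod.ext hrow hcol)
    rw [hrow] at ha
    omega
  · have : π.entry (b.1 - 1) j ≤ π.entry a.1 j := π.entry_antitone_row j (by omega)
    have := h.le.2
    omega

theorem descentSet_subset_setOf_entry_pos {i k : ℕ} (hki : k ≤ i) (ℓ : ℕ) :
    π.descentSet i ℓ ⊆ {j | 0 < π.entry (k - 1) j} := fun j ⟨hj, hj'⟩ => by
  have : π.entry (i - 1) j ≤ π.entry (k - 1) j := π.entry_antitone_row j (by omega)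
  change 0 < π.entry (k - 1) j
  omega

end PlanePartition

theorem stmt3_general (π : PlanePartition) (m n k : ℕ) (hk1 : 1 ≤ k)
    (p : List (ℕ × ℕ)) (hp : IsDirPath p (k, 1) (m, n)) :
    p.Pairwise (fun a b =>
      Disjoint {j | π.entry (a.1 - 1) j = a.2 ∧ π.entry a.1 j < a.2}
               {j | π.entry (b.1 - 1) j = b.2 ∧ π.entry b.1 j < b.2}) ∧
    pathSum (fun i ℓ => dstat π (i - 1) ℓ) p ≤ part π (k - 1) := by
  have hdisj : p.Pairwise fun a b => Disjoint (π.descentSet a.1 a.2) (π.descentSet b.1 b.2) :=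
    hp.pairwise_lt.imp (π.disjoint_descentSet_of_lt ·)
  have hrow : ∀ a ∈ p, k ≤ a.1 := fun a ha => (hp.le_of_mem ha).1
  refine ⟨hdisj, ?_⟩
  calc pathSum (fun i ℓ => dstat π (i - 1) ℓ) p
      = (p.map fun a => (π.descentSet a.1 a.2).ncard).sum := by
        refine congrArg List.sum (List.map_congr_left fun a ha => ?_)
        exact (π.ncard_descentSet (hk1.trans (hrow a ha)) a.2).symm
    _ ≤ part π (k - 1) :=
        Set.sum_map_ncard_le_of_pairwise_disjoint _ p (π.finite_setOf_entry_pos _)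
          (fun a ha => π.descentSet_subset_setOf_entry_pos (hrow a ha) a.2) hdisj

/-- along a directed path `Π` from `(k,1)` to `(m,n)` the descent level
sets `D_{iℓ} = {j : π_{ij} = ℓ > π_{i+1,j}}` are pairwise disjoint, and consequently
`Σ_{(i,ℓ) ∈ Π} d_{iℓ} ≤ λ_k` (1-indexed coordinates). -/
theorem stmt3 (π : PlanePartition) (m n k : ℕ) (hk1 : 1 ≤ k) (hkm : k ≤ m)
    (hrows : ∀ i j, m ≤ i → π.entry i j = 0)
    (hent : ∀ i j, π.entry i j ≤ n)
    (p : List (ℕ × ℕ)) (hp : IsDirPath p (k, 1) (m, n)) :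
    p.Pairwise (fun a b =>
      Disjoint {j | π.entry (a.1 - 1) j = a.2 ∧ π.entry a.1 j < a.2}
               {j | π.entry (b.1 - 1) j = b.2 ∧ π.entry b.1 j < b.2}) ∧
    pathSum (fun i ℓ => dstat π (i - 1) ℓ) p ≤ part π (k - 1) :=
  stmt3_general π m n k hk1 p hp
end

section
/- Let W = (w_{iℓ}) be an m × n matrix of independent random variables where w_{iℓ} is geometric with parameter q_ℓ ∈ (0,1), i.e. Prob(w_{iℓ} = k) = (1−q_ℓ)q_ℓ^k for k ∈ ℕ. Then for any plane partition π with at most m rows and largest entry at most n, Prob(W = Φ(π)) = ∏_{ℓ=1}^n (1−q_ℓ)^m q_ℓ^{c_ℓ(π)}, where Φ(π) = (d_{iℓ}) with d_{iℓ} = |{j : π_{ij} = ℓ > π_{i+1,j}}| and c_ℓ(π) is the number of columns of π containing ℓ. -/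
open scoped BigOperators

lemma key_sum_dstat (m : ℕ) (π : PlanePartition)
    (hrows : ∀ i j, m ≤ i → π.entry i j = 0) {ℓ : ℕ} (hℓ : 1 ≤ ℓ) :
    ∑ i : Fin m, dstat π i.1 ℓ = colCount π ℓ := by
  classical
  have anti : ∀ j, Antitone fun i => π.entry i j := fun j =>
    antitone_nat_of_succ_le fun i => π.col_dec i j
  set J : Finset ℕ := π.finite_support.toFinset.image Prod.snd with hJ
  have hmem : ∀ i j, π.entry i j = ℓ → j ∈ J := by
    intro i j h
    refine Finset.mem_image.2 ⟨(i, j), ?_, rfl⟩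
    simp only [Set.Finite.mem_toFinset, Function.mem_support]
    omega
  have hd : ∀ i, dstat π i ℓ =
      (J.filter fun j => π.entry i j = ℓ ∧ π.entry (i + 1) j < ℓ).card := by
    intro i
    rw [dstat, ← Set.ncard_coe_finset]
    congr 1
    ext j
    simp only [Finset.coe_filter, Set.mem_setOf_eq]
    exact ⟨fun h => ⟨hmem i j h.1, h⟩, fun h => h.2⟩
  have hc : colCount π ℓ = (J.filter fun j => ∃ i, π.entry i j = ℓ).card := by
    rw [colCount, ← Set.ncard_coe_finset]
    congr 1
    ext j
    simp only [Finset.coe_filter, Set.mem_setOf_eq]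
    exact ⟨fun ⟨i, h⟩ => ⟨hmem i j h, i, h⟩, fun h => h.2⟩
  have hdisj : ∀ i ∈ (Finset.univ : Finset (Fin m)), ∀ i' ∈ (Finset.univ : Finset (Fin m)),
      i ≠ i' → Disjoint (J.filter fun j => π.entry i.1 j = ℓ ∧ π.entry (i.1 + 1) j < ℓ)
        (J.filter fun j => π.entry i'.1 j = ℓ ∧ π.entry (i'.1 + 1) j < ℓ) := by
    have h2 : ∀ (a b : ℕ), a < b → ∀ j,
        ¬((π.entry a j = ℓ ∧ π.entry (a + 1) j < ℓ) ∧
          (π.entry b j = ℓ ∧ π.entry (b + 1) j < ℓ)) := by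
      rintro a b hab j ⟨⟨_, h1⟩, h2, _⟩
      have : π.entry b j ≤ π.entry (a + 1) j := anti j (by omega)
      omega
    intro i _ i' _ hne
    rw [Finset.disjoint_left]
    intro j hj hj'
    simp only [Finset.mem_filter] at hj hj'
    rcases lt_or_gt_of_ne (fun h : i.1 = i'.1 => hne (Fin.ext h)) with h | h
    · exact h2 i.1 i'.1 h j ⟨hj.2, hj'.2⟩
    · exact h2 i'.1 i.1 h j ⟨hj'.2, hj.2⟩
  rw [hc]
  simp only [hd]
  rw [← Finset.card_biUnion hdisj]
  congr 1
  ext j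
  simp only [Finset.mem_biUnion, Finset.mem_filter, Finset.mem_univ, true_and]
  constructor
  · rintro ⟨i, hi1, hi2, _⟩
    exact ⟨hi1, i.1, hi2⟩
  · rintro ⟨hjJ, i₀, h₀⟩
    have hi₀ : i₀ < m := by
      by_contra h
      have := hrows i₀ j (by omega)
      omega
    have hP : π.entry (Nat.findGreatest (fun k => π.entry k j = ℓ) m) j = ℓ :=
      Nat.findGreatest_spec (P := fun k => π.entry k j = ℓ) (le_of_lt hi₀) h₀
    have hle : Nat.findGreatest (fun k => π.entry k j = ℓ) m ≤ m :=
      Nat.findGreatest_le (P := fun k => π.entry k j = ℓ) m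
    have him : Nat.findGreatest (fun k => π.entry k j = ℓ) m < m := by
      rcases lt_or_eq_of_le hle with h | h
      · exact h
      · exfalso
        rw [h] at hP
        have := hrows m j le_rfl
        omega
    have hne : ¬ (π.entry (Nat.findGreatest (fun k => π.entry k j = ℓ) m + 1) j = ℓ) :=
      Nat.findGreatest_is_greatest (P := fun k => π.entry k j = ℓ) (n := m)
        (by omega) (by omega)
    have hcol := π.col_dec (Nat.findGreatest (fun k => π.entry k j = ℓ) m) j
    refine ⟨⟨Nat.findGreatest (fun k => π.entry k j = ℓ) m, him⟩, hjJ, hP, ?_⟩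
    simp only []
    omega


/-- for an `m × n` matrix of independent geometric entries with column
parameters `q_ℓ ∈ (0,1)` and a plane partition `π` with at most `m` rows and entries
at most `n`, `Prob(W = Φ(π)) = ∏_ℓ (1 - q_ℓ)^m q_ℓ^{c_ℓ(π)}`. -/
theorem stmt4 (m n : ℕ) (q : Fin n → ℝ) (hq : ∀ ℓ, 0 < q ℓ ∧ q ℓ < 1)
    (π : PlanePartition)
    (hrows : ∀ i j, m ≤ i → π.entry i j = 0)
    (hent : ∀ i j, π.entry i j ≤ n) :
    geomProb q {w : Fin m → Fin n → ℕ | w = fun i ℓ => dstat π i.1 (ℓ.1 + 1)} =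
      ∏ ℓ : Fin n, (1 - q ℓ) ^ m * q ℓ ^ colCount π (ℓ.1 + 1) := by
  have hset : {w : Fin m → Fin n → ℕ | w = fun i ℓ => dstat π i.1 (ℓ.1 + 1)} =
      {fun i ℓ => dstat π i.1 (ℓ.1 + 1)} := Set.setOf_eq_eq_singleton
  rw [geomProb, hset, tsum_singleton]
  rw [geomWt, Finset.prod_comm]
  refine Finset.prod_congr rfl fun ℓ _ => ?_
  rw [Finset.prod_mul_distrib, Finset.prod_const, Finset.card_univ, Fintype.card_fin,
    Finset.prod_pow_eq_pow_sum, key_sum_dstat m π hrows (by omega)]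
end

section
/- For any m, n ≥ 1 and q_1,…,q_n ∈ (0,1), the sum of dual Grothendieck polynomials over all partitions with at most m parts satisfies Σ_{λ ∈ P_m} g_λ(q_1,…,q_n) = ∏_{i=1}^n (1−q_i)^{−m}. -/
open scoped BigOperators

/-!
For a plane partition `π` let `r i ℓ` be the number of entries of row `i` exceeding `ℓ`. Then
`d_{i,ℓ+1}(π) = r i ℓ - max (r i (ℓ+1)) (r (i+1) ℓ)`, so `r` satisfies the last-passage recursion
`r i ℓ = d_{i,ℓ+1} + max (r (i+1) ℓ) (r i (ℓ+1))`. Since `π` is determined by `r`, and the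
last-passage times of any weight matrix are the `r` of a plane partition, `π ↦ (d_{i,ℓ+1}(π))` is a
bijection from plane partitions with at most `m` nonzero rows and entries at most `n` onto
`ℕ^{m×n}`. As `c_{ℓ+1}(π) = ∑ i, d_{i,ℓ+1}(π)`, the generating function factors into `m n`
geometric series.
-/

open scoped ENNReal

theorem Nat.sInf_le_iff_of_monotone {p : ℕ → Prop} (hp : Monotone p) (hne : ∃ k, p k) (k : ℕ) :
    sInf {k | p k} ≤ k ↔ p k :=
  ⟨fun h => hp h (Nat.sInf_mem hne), fun h => Nat.sInf_le h⟩

theorem ENNReal.tsum_fin_pi_prod {α : Type*} :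
    ∀ {k : ℕ} (g : Fin k → α → ℝ≥0∞), ∑' f : Fin k → α, ∏ i, g i (f i) = ∏ i, ∑' a, g i a
  | 0, g => by simp
  | k + 1, g => by
    rw [← (Fin.consEquiv fun _ => α).tsum_eq]
    simp only [Fin.consEquiv_apply, Fin.prod_univ_succ, Fin.cons_zero, Fin.cons_succ]
    rw [ENNReal.tsum_prod (f := fun (a : α) (v : Fin k → α) => g 0 a * ∏ i, g i.succ (v i))]
    simp only [ENNReal.tsum_mul_left, ENNReal.tsum_fin_pi_prod, ENNReal.tsum_mul_right]

namespace PlanePartition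

variable (π : PlanePartition)

theorem antitone_entry_row (i : ℕ) : Antitone (π.entry i) :=
  antitone_nat_of_succ_le (π.row_dec i)

theorem antitone_entry_col (j : ℕ) : Antitone (π.entry · j) :=
  antitone_nat_of_succ_le (π.col_dec · j)

theorem exists_entry_eq_zero (i : ℕ) : ∃ j, π.entry i j = 0 := by
  obtain ⟨j, hj⟩ :=
    (π.finite_support.preimage (Prod.mk_right_injective i).injOn).exists_notMem
  exact ⟨j, by simpa using hj⟩

/-- The number of entries of row `i` exceeding `c`. -/
noncomputable def rowLen (i c : ℕ) : ℕ := sInf {j | π.entry i j ≤ c}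

theorem rowLen_le_iff {i c j : ℕ} : π.rowLen i c ≤ j ↔ π.entry i j ≤ c :=
  Nat.sInf_le_iff_of_monotone (fun _ _ h hle => (π.antitone_entry_row i h).trans hle)
    (let ⟨j, hj⟩ := π.exists_entry_eq_zero i; ⟨j, hj ▸ Nat.zero_le c⟩) j

theorem eq_of_rowLen_eq {π π' : PlanePartition} (h : π.rowLen = π'.rowLen) : π = π' := by
  have hentry : π.entry = π'.entry := by
    funext i j
    apply le_antisymm
    · rw [← rowLen_le_iff, h, rowLen_le_iff]
    · rw [← rowLen_le_iff, ← h, rowLen_le_iff]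
  cases π; cases π'; subst hentry; rfl

theorem rowLen_succ_right_le (i c : ℕ) : π.rowLen i (c + 1) ≤ π.rowLen i c :=
  π.rowLen_le_iff.2 ((π.rowLen_le_iff.1 le_rfl).trans c.le_succ)

theorem rowLen_succ_left_le (i c : ℕ) : π.rowLen (i + 1) c ≤ π.rowLen i c :=
  π.rowLen_le_iff.2 ((π.col_dec i _).trans (π.rowLen_le_iff.1 le_rfl))

theorem part_eq_rowLen (k : ℕ) : part π k = π.rowLen k 0 := by
  have : {j | 0 < π.entry k j} = Set.Iio (π.rowLen k 0) := by
    ext j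
    simp only [Set.mem_ofPred_eq, Set.mem_Iio, ← not_le, π.rowLen_le_iff]
  rw [part, this, Set.ncard_Iio_nat]

theorem part_antitone : Antitone (part π) :=
  antitone_nat_of_succ_le fun k => by
    simpa only [part_eq_rowLen] using π.rowLen_succ_left_le k 0

theorem part_eq_zero_iff {k : ℕ} : part π k = 0 ↔ ∀ j, π.entry k j = 0 := by
  rw [part_eq_rowLen, ← Nat.le_zero, rowLen_le_iff]
  exact ⟨fun h j => Nat.le_zero.1 ((π.antitone_entry_row k (Nat.zero_le j)).trans h),
    fun h => (h 0).le⟩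

theorem setOf_dstat_eq_Ico (i c : ℕ) :
    {j | π.entry i j = c + 1 ∧ π.entry (i + 1) j < c + 1} =
      Set.Ico (max (π.rowLen i (c + 1)) (π.rowLen (i + 1) c)) (π.rowLen i c) := by
  ext j
  have h₁ := π.rowLen_le_iff (i := i) (c := c) (j := j)
  have h₂ := π.rowLen_le_iff (i := i) (c := c + 1) (j := j)
  have h₃ := π.rowLen_le_iff (i := i + 1) (c := c) (j := j)
  simp only [Set.mem_ofPred_eq, Set.mem_Ico, max_le_iff]
  omega

theorem dstat_succ (i c : ℕ) :
    dstat π i (c + 1) = π.rowLen i c - max (π.rowLen i (c + 1)) (π.rowLen (i + 1) c) := by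
  rw [dstat, setOf_dstat_eq_Ico, Set.ncard_Ico_nat]

theorem rowLen_eq_dstat_add_max (i c : ℕ) :
    π.rowLen i c = dstat π i (c + 1) + max (π.rowLen (i + 1) c) (π.rowLen i (c + 1)) := by
  have := max_le (π.rowLen_succ_right_le i c) (π.rowLen_succ_left_le i c)
  rw [dstat_succ, max_comm (π.rowLen (i + 1) c)]
  omega

theorem colCount_succ_eq_sum_dstat {m : ℕ} (hπ : ∀ k, m ≤ k → part π k = 0) (c : ℕ) :
    colCount π (c + 1) = ∑ i : Fin m, dstat π i (c + 1) := by
  have hzero : ∀ k, m ≤ k → ∀ j, π.entry k j = 0 := fun k hk => π.part_eq_zero_iff.1 (hπ k hk)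
  set S : Fin m → Set ℕ := fun i => {j | π.entry i j = c + 1 ∧ π.entry (i + 1) j < c + 1}
  have hunion : {j | ∃ i, π.entry i j = c + 1} = ⋃ i, S i := by
    ext j
    simp only [Set.mem_ofPred_eq, Set.mem_iUnion]
    constructor
    · rintro ⟨i, hi⟩
      have him : i ≤ m := by
        by_contra h
        have := hzero i (by omega) j
        omega
      set k := Nat.findGreatest (fun k => c + 1 ≤ π.entry k j) m
      have hk : c + 1 ≤ π.entry k j := Nat.findGreatest_spec (P := fun k => c + 1 ≤ π.entry k j) him hi.ge
      have hkm : k < m := by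
        refine lt_of_le_of_ne (Nat.findGreatest_le m) fun h => ?_
        have := hzero m le_rfl j
        rw [h] at hk
        omega
      refine ⟨⟨k, hkm⟩, le_antisymm ?_ hk, ?_⟩
      · exact hi ▸ π.antitone_entry_col j (Nat.le_findGreatest him hi.ge)
      · exact not_le.1 (Nat.findGreatest_is_greatest (P := fun k => c + 1 ≤ π.entry k j)
          (k := k + 1) (Nat.lt_succ_self k) hkm)
    · rintro ⟨i, hi, -⟩
      exact ⟨i, hi⟩
  have hdisj : Pairwise (Function.onFun Disjoint S) := by
    refine (pairwise_disjoint_on _).2 fun a b hab => Set.disjoint_left.2 ?_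
    rintro j ⟨-, ha⟩ ⟨hb, -⟩
    have : π.entry b j ≤ π.entry (a + 1) j := π.antitone_entry_col j (show (a : ℕ) + 1 ≤ b from hab)
    omega
  rw [colCount, hunion, Set.ncard_iUnion_of_finite (fun i => by
    simp only [S, setOf_dstat_eq_Ico, Set.finite_Ico]) hdisj, finsum_eq_sum_of_fintype]
  rfl

def bounded (m n : ℕ) : Set PlanePartition :=
  {π | (∀ i j, π.entry i j ≤ n) ∧ ∀ k, m ≤ k → part π k = 0}

theorem rowLen_eq_zero_of_mem_bounded {m n : ℕ} (hπ : π ∈ bounded m n) {i c : ℕ}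
    (h : m ≤ i ∨ n ≤ c) : π.rowLen i c = 0 := by
  rw [← Nat.le_zero, rowLen_le_iff]
  rcases h with h | h
  · exact ((π.part_eq_zero_iff.1 (hπ.2 i h)) 0).trans_le (Nat.zero_le c)
  · exact (hπ.1 i 0).trans h

end PlanePartition

def passageTime {m n : ℕ} (d : Fin m → Fin n → ℕ) (i c : ℕ) : ℕ :=
  if h : i < m ∧ c < n then
    d ⟨i, h.1⟩ ⟨c, h.2⟩ + max (passageTime d (i + 1) c) (passageTime d i (c + 1))
  else 0
termination_by (m - i) + (n - c)

section PassageTime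

variable {m n : ℕ} (d : Fin m → Fin n → ℕ)

theorem passageTime_of_le {i c : ℕ} (h : m ≤ i ∨ n ≤ c) : passageTime d i c = 0 := by
  rw [passageTime, dif_neg (by omega)]

theorem passageTime_of_lt {i c : ℕ} (hi : i < m) (hc : c < n) :
    passageTime d i c =
      d ⟨i, hi⟩ ⟨c, hc⟩ + max (passageTime d (i + 1) c) (passageTime d i (c + 1)) := by
  rw [passageTime, dif_pos ⟨hi, hc⟩]

theorem passageTime_succ_right_le (i c : ℕ) : passageTime d i (c + 1) ≤ passageTime d i c := by
  by_cases h : i < m ∧ c < n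
  · rw [passageTime_of_lt d h.1 h.2]
    omega
  · rw [passageTime_of_le d (show m ≤ i ∨ n ≤ c + 1 by omega)]
    exact Nat.zero_le _

theorem passageTime_succ_left_le (i c : ℕ) : passageTime d (i + 1) c ≤ passageTime d i c := by
  by_cases h : i < m ∧ c < n
  · rw [passageTime_of_lt d h.1 h.2]
    omega
  · rw [passageTime_of_le d (show m ≤ i + 1 ∨ n ≤ c by omega)]
    exact Nat.zero_le _

theorem eq_passageTime {A : ℕ → ℕ → ℕ} (hzero : ∀ i c, m ≤ i ∨ n ≤ c → A i c = 0)
    (hrec : ∀ i c (hi : i < m) (hc : c < n),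
      A i c = d ⟨i, hi⟩ ⟨c, hc⟩ + max (A (i + 1) c) (A i (c + 1)))
    (i c : ℕ) : A i c = passageTime d i c := by
  by_cases h : i < m ∧ c < n
  · rw [hrec i c h.1 h.2, passageTime_of_lt d h.1 h.2, eq_passageTime hzero hrec (i + 1) c,
      eq_passageTime hzero hrec i (c + 1)]
  · rw [hzero i c (by omega), passageTime_of_le d (by omega)]
termination_by (m - i) + (n - c)

theorem sInf_passageTime_le_iff (i j c : ℕ) :
    sInf {c | passageTime d i c ≤ j} ≤ c ↔ passageTime d i c ≤ j :=
  Nat.sInf_le_iff_of_monotone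
    (fun _ _ h hle => (antitone_nat_of_succ_le (passageTime_succ_right_le d i) h).trans hle)
    ⟨n, (passageTime_of_le d (Or.inr le_rfl)).trans_le (Nat.zero_le j)⟩ c

end PassageTime

namespace PlanePartition

noncomputable def ofWeights {m n : ℕ} (d : Fin m → Fin n → ℕ) : PlanePartition where
  entry i j := sInf {c | passageTime d i c ≤ j}
  finite_support := by
    refine ((Set.finite_Iio m).prod (Set.finite_Iio (passageTime d 0 0))).subset ?_
    rintro ⟨i, j⟩ hij
    have hj : j < passageTime d i 0 := not_le.1 fun h =>
      hij (Nat.le_zero.1 ((sInf_passageTime_le_iff d i j 0).2 h))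
    have hi : i < m := by
      by_contra h
      rw [passageTime_of_le d (Or.inl (not_lt.1 h))] at hj
      exact Nat.not_lt_zero _ hj
    exact ⟨hi, hj.trans_le (antitone_nat_of_succ_le (f := (passageTime d · 0))
      (passageTime_succ_left_le d · 0) (Nat.zero_le i))⟩
  row_dec i j := (sInf_passageTime_le_iff d i (j + 1) _).2
    (((sInf_passageTime_le_iff d i j _).1 le_rfl).trans j.le_succ)
  col_dec i j := (sInf_passageTime_le_iff d (i + 1) j _).2
    ((passageTime_succ_left_le d i _).trans ((sInf_passageTime_le_iff d i j _).1 le_rfl))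

variable {m n : ℕ} (d : Fin m → Fin n → ℕ)

theorem rowLen_ofWeights : (ofWeights d).rowLen = passageTime d := by
  funext i c
  apply le_antisymm
  · exact rowLen_le_iff _ |>.2 ((sInf_passageTime_le_iff d i _ c).2 le_rfl)
  · exact (sInf_passageTime_le_iff d i _ c).1 ((ofWeights d).rowLen_le_iff.1 le_rfl)

theorem ofWeights_mem_bounded : ofWeights d ∈ bounded m n := by
  refine ⟨fun i j => (sInf_passageTime_le_iff d i j n).2 ?_, fun k hk => ?_⟩
  · rw [passageTime_of_le d (Or.inr le_rfl)]
    exact Nat.zero_le j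
  · rw [part_eq_rowLen, rowLen_ofWeights, passageTime_of_le d (Or.inl hk)]

noncomputable def weightsEquiv (m n : ℕ) : bounded m n ≃ (Fin m → Fin n → ℕ) where
  toFun π i c := dstat π i (c + 1)
  invFun d := ⟨ofWeights d, ofWeights_mem_bounded d⟩
  left_inv π := Subtype.ext <| eq_of_rowLen_eq <| by
    rw [rowLen_ofWeights]
    funext i c
    exact (eq_passageTime _ (fun i c h => π.1.rowLen_eq_zero_of_mem_bounded π.2 h)
      (fun i c _ _ => π.1.rowLen_eq_dstat_add_max i c) i c).symm
  right_inv d := by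
    funext i c
    simp only [dstat_succ, rowLen_ofWeights]
    rw [passageTime_of_lt d i.2 c.2, max_comm]
    simp only [Fin.eta]
    omega

theorem tsum_bounded_prod_pow_colCount (m : ℕ) {n : ℕ} (x : Fin n → ℝ≥0∞) :
    ∑' π : bounded m n, ∏ ℓ : Fin n, x ℓ ^ colCount π.1 (ℓ + 1) = ∏ ℓ, (1 - x ℓ)⁻¹ ^ m := by
  rw [← (weightsEquiv m n).symm.tsum_eq]
  have hterm (d : Fin m → Fin n → ℕ) :
      ∏ ℓ, x ℓ ^ colCount ((weightsEquiv m n).symm d).1 (ℓ + 1) = ∏ i, ∏ ℓ, x ℓ ^ d i ℓ := by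
    set π := (weightsEquiv m n).symm d
    have hcol (ℓ : Fin n) : colCount π.1 (ℓ + 1) = ∑ i, d i ℓ := by
      rw [colCount_succ_eq_sum_dstat π.1 π.2.2, ← (weightsEquiv m n).apply_symm_apply d]
      rfl
    simp only [hcol, ← Finset.prod_pow_eq_pow_sum]
    exact Finset.prod_comm
  simp only [hterm]
  rw [ENNReal.tsum_fin_pi_prod (fun _ (r : Fin n → ℕ) => ∏ ℓ, x ℓ ^ r ℓ)]
  simp only [ENNReal.tsum_fin_pi_prod (fun ℓ k => x ℓ ^ k), ENNReal.tsum_geometric,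
    Finset.prod_const, Finset.card_univ, Fintype.card_fin, Finset.prod_pow]

theorem tsum_isPartWithParts_tsum_hasShape (m n : ℕ) (f : PlanePartition → ℝ≥0∞) :
    ∑' lam : {lam : ℕ → ℕ // IsPartWithParts m lam},
        ∑' π : {π : PlanePartition // HasShape π lam ∧ ∀ i j, π.entry i j ≤ n}, f π =
      ∑' π : bounded m n, f π := by
  let e : (Σ lam : {lam : ℕ → ℕ // IsPartWithParts m lam},
      {π : PlanePartition // HasShape π lam ∧ ∀ i j, π.entry i j ≤ n}) ≃ bounded m n :=
    { toFun x := ⟨x.2, x.2.2.2, fun k hk => (x.2.2.1 k).trans (x.1.2.2 k hk)⟩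
      invFun π := ⟨⟨part π, π.1.part_antitone, π.2.2⟩, π, fun _ => rfl, π.2.1⟩
      left_inv := by
        rintro ⟨⟨lam, _⟩, π, hshape, _⟩
        obtain rfl : part π = lam := funext hshape
        rfl
      right_inv _ := rfl }
  exact (ENNReal.tsum_sigma' fun x => f (e x)).symm.trans (e.tsum_eq fun π => f π)

end PlanePartition

theorem dualG_eq_toReal_tsum {n : ℕ} (lam : ℕ → ℕ) (q : Fin n → ℝ) (hq : ∀ i, 0 ≤ q i) :
    dualG lam n q =
      (∑' π : {π : PlanePartition // HasShape π lam ∧ ∀ i j, π.entry i j ≤ n},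
        ∏ ℓ : Fin n, ENNReal.ofReal (q ℓ) ^ colCount π (ℓ + 1)).toReal := by
  rw [dualG, ENNReal.tsum_toReal_eq fun _ =>
    ENNReal.prod_ne_top fun _ _ => ENNReal.pow_ne_top ENNReal.ofReal_ne_top]
  simp [ENNReal.toReal_prod, ENNReal.toReal_ofReal, hq]

theorem stmt12_general (m n : ℕ)
    (q : Fin n → ℝ) (hq : ∀ i, 0 < q i ∧ q i < 1) :
    ∑' lam : {lam : ℕ → ℕ // IsPartWithParts m lam}, dualG lam.1 n q =
      ∏ i : Fin n, (1 - q i) ^ (-(m : ℤ)) := by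
  have htotal := (PlanePartition.tsum_isPartWithParts_tsum_hasShape m n
    fun π => ∏ ℓ : Fin n, ENNReal.ofReal (q ℓ) ^ colCount π (ℓ + 1)).trans
    (PlanePartition.tsum_bounded_prod_pow_colCount m fun ℓ => ENNReal.ofReal (q ℓ))
  have hsub (ℓ : Fin n) : 1 - ENNReal.ofReal (q ℓ) = ENNReal.ofReal (1 - q ℓ) := by
    rw [ENNReal.ofReal_sub 1 (hq ℓ).1.le, ENNReal.ofReal_one]
  have hfinite : ∏ ℓ, (1 - ENNReal.ofReal (q ℓ))⁻¹ ^ m ≠ ⊤ := by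
    simp only [hsub]
    exact ENNReal.prod_ne_top fun ℓ _ => ENNReal.pow_ne_top <| ENNReal.inv_ne_top.2 <|
      ENNReal.ofReal_pos.2 (sub_pos.2 (hq ℓ).2) |>.ne'
  simp only [dualG_eq_toReal_tsum _ q fun i => (hq i).1.le]
  rw [← ENNReal.tsum_toReal_eq (ENNReal.ne_top_of_tsum_ne_top (htotal ▸ hfinite)), htotal]
  simp [hsub, ENNReal.toReal_prod, ENNReal.toReal_ofReal, sub_nonneg.2 (hq _).2.le]

/-- `Σ_{λ ∈ P_m} g_λ(q_1,…,q_n) = ∏_i (1 - q_i)^{-m}`. -/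
theorem stmt12 (m n : ℕ) (hm : 1 ≤ m) (hn : 1 ≤ n)
    (q : Fin n → ℝ) (hq : ∀ i, 0 < q i ∧ q i < 1) :
    ∑' lam : {lam : ℕ → ℕ // IsPartWithParts m lam}, dualG lam.1 n q =
      ∏ i : Fin n, (1 - q i) ^ (-(m : ℤ)) :=
  stmt12_general m n q hq
end

section
/- For a ∈ ℕ and m ≥ 1, Σ_{λ ∈ P_m, λ_m = a} g_λ(q_1,…,q_n) = ∏_{i=1}^n (1−q_i)^{1−m} · h_a(q_1,…,q_n), where h_a is the complete homogeneous symmetric polynomial of degree a. -/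
open scoped BigOperators

/-! Helper lemmas about down-closed sets -/

lemma downset_mem_iff (F : Finset ℕ) (hdc : ∀ j ∈ F, ∀ j', j' ≤ j → j' ∈ F) (x : ℕ) :
    x ∈ F ↔ x < F.card := by
  constructor
  · intro hx
    have hsub : Finset.range (x + 1) ⊆ F := fun j hj =>
      hdc x hx j (Nat.lt_succ_iff.mp (Finset.mem_range.mp hj))
    have := Finset.card_le_card hsub
    simp only [Finset.card_range] at this
    omega
  · intro hx
    by_contra hxn
    have hsub : F ⊆ Finset.range x := by
      intro j hj
      rcases lt_or_ge j x with h | h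
      · simpa using h
      · exact absurd (hdc j hj x h) hxn
    have := Finset.card_le_card hsub
    simp only [Finset.card_range] at this
    omega

lemma set_downset_mem_iff (S : Set ℕ) (hfin : S.Finite)
    (hdc : ∀ j ∈ S, ∀ j', j' ≤ j → j' ∈ S) (x : ℕ) :
    x ∈ S ↔ x < S.ncard := by
  have h1 : S = ↑hfin.toFinset := by simp
  rw [h1, Set.ncard_coe_finset]
  refine downset_mem_iff _ (fun j hj j' hle => ?_) x
  simp only [Set.Finite.mem_toFinset] at *
  exact hdc j hj j' hle

lemma icc_downset_mem_iff {n : ℕ} (F : Finset ℕ) (hF : F ⊆ Finset.Icc 1 n)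
    (hdc : ∀ ℓ ∈ F, ∀ ℓ', 1 ≤ ℓ' → ℓ' ≤ ℓ → ℓ' ∈ F) {ℓ : ℕ} (hℓ : 1 ≤ ℓ) :
    ℓ ∈ F ↔ ℓ ≤ F.card := by
  constructor
  · intro h
    have hsub : Finset.Icc 1 ℓ ⊆ F := fun j hj => by
      rw [Finset.mem_Icc] at hj; exact hdc ℓ h j hj.1 hj.2
    have := Finset.card_le_card hsub
    rw [Nat.card_Icc] at this
    omega
  · intro h
    by_contra hn
    have hsub : F ⊆ Finset.Icc 1 (ℓ - 1) := by
      intro j hj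
      have hj' := hF hj
      rw [Finset.mem_Icc] at *
      rcases lt_or_ge j ℓ with h' | h'
      · exact ⟨hj'.1, by omega⟩
      · exact absurd (hdc j hj ℓ hℓ h') hn
    have := Finset.card_le_card hsub
    rw [Nat.card_Icc] at this
    omega

lemma row_galois (r : ℕ → ℕ) (hr : Antitone r) {ℓ : ℕ} (hfin : {j | ℓ ≤ r j}.Finite) (j : ℕ) :
    ℓ ≤ r j ↔ j < ({j | ℓ ≤ r j}).ncard :=
  set_downset_mem_iff {j | ℓ ≤ r j} hfin (fun _ hj j' hle => le_trans hj (hr hle)) j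

lemma ncard_Iio (c : ℕ) : (Set.Iio c).ncard = c := by
  rw [← Finset.coe_Iio, Set.ncard_coe_finset, Nat.card_Iio]

/-! The step construction -/

def stepAux (n : ℕ) (prev dr : ℕ → ℕ) : ℕ → ℕ
  | 0 => 0
  | (t+1) => max (stepAux n prev dr t) (prev (n - t)) + dr (n - t)

def stepFn (n : ℕ) (prev dr : ℕ → ℕ) (ℓ : ℕ) : ℕ := stepAux n prev dr (n + 1 - ℓ)

lemma stepFn_rec (n : ℕ) (prev dr : ℕ → ℕ) {ℓ : ℕ} (hℓ : ℓ ≤ n) :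
    stepFn n prev dr ℓ = max (stepFn n prev dr (ℓ+1)) (prev ℓ) + dr ℓ := by
  unfold stepFn
  have h1 : n + 1 - ℓ = (n - ℓ) + 1 := by omega
  have h2 : n + 1 - (ℓ + 1) = n - ℓ := by omega
  have h3 : n - (n - ℓ) = ℓ := by omega
  rw [h1, h2, stepAux, h3]

lemma stepFn_zero (n : ℕ) (prev dr : ℕ → ℕ) {ℓ : ℕ} (hℓ : n + 1 ≤ ℓ) :
    stepFn n prev dr ℓ = 0 := by
  unfold stepFn
  have : n + 1 - ℓ = 0 := by omega
  rw [this]; rfl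

lemma stepFn_succ_le (n : ℕ) (prev dr : ℕ → ℕ) (ℓ : ℕ) :
    stepFn n prev dr (ℓ+1) ≤ stepFn n prev dr ℓ := by
  rcases le_or_gt ℓ n with h | h
  · rw [stepFn_rec n prev dr h]; omega
  · rw [stepFn_zero n prev dr (by omega), stepFn_zero n prev dr (by omega)]

lemma le_stepFn (n : ℕ) (prev dr : ℕ → ℕ) (h0 : ∀ ℓ, n + 1 ≤ ℓ → prev ℓ = 0) (ℓ : ℕ) :
    prev ℓ ≤ stepFn n prev dr ℓ := by
  rcases le_or_gt ℓ n with h | h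
  · rw [stepFn_rec n prev dr h]; omega
  · rw [h0 ℓ (by omega)]; exact Nat.zero_le _

def rowsB (n : ℕ) (bot : ℕ → ℕ) (dm : ℕ → ℕ → ℕ) : ℕ → ℕ → ℕ
  | 0 => bot
  | (k+1) => stepFn n (rowsB n bot dm k) (dm k)

section rowsB
variable (n : ℕ) (bot : ℕ → ℕ) (dm : ℕ → ℕ → ℕ)
  (hbot0 : ∀ ℓ, n + 1 ≤ ℓ → bot ℓ = 0) (hbota : ∀ ℓ, bot (ℓ+1) ≤ bot ℓ)

include hbot0 in
lemma rowsB_zero (k : ℕ) : ∀ ℓ, n + 1 ≤ ℓ → rowsB n bot dm k ℓ = 0 := by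
  induction k with
  | zero => exact hbot0
  | succ k ih => exact fun ℓ hℓ => stepFn_zero n _ _ hℓ

include hbota in
lemma rowsB_succ_le (k : ℕ) : ∀ ℓ, rowsB n bot dm k (ℓ+1) ≤ rowsB n bot dm k ℓ := by
  induction k with
  | zero => exact hbota
  | succ k ih => exact fun ℓ => stepFn_succ_le n _ _ ℓ

include hbot0 in
lemma rowsB_le_succ (k : ℕ) (ℓ : ℕ) : rowsB n bot dm k ℓ ≤ rowsB n bot dm (k+1) ℓ :=
  le_stepFn n _ _ (rowsB_zero n bot dm hbot0 k) ℓ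

end rowsB

/-! The `B`-matrix -/

def BB (m n : ℕ) (bot : ℕ → ℕ) (dd : ℕ → ℕ → ℕ) (i ℓ : ℕ) : ℕ :=
  if i < m then rowsB n bot (fun k => dd (m - 2 - k)) (m - 1 - i) ℓ else 0

section BB
variable (m n : ℕ) (bot : ℕ → ℕ) (dd : ℕ → ℕ → ℕ)
  (hbot0 : ∀ ℓ, n + 1 ≤ ℓ → bot ℓ = 0) (hbota : ∀ ℓ, bot (ℓ+1) ≤ bot ℓ)

lemma BB_last (hm : 1 ≤ m) (ℓ : ℕ) : BB m n bot dd (m-1) ℓ = bot ℓ := by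
  unfold BB
  rw [if_pos (by omega : m - 1 < m)]
  have : m - 1 - (m - 1) = 0 := by omega
  rw [this]; rfl

lemma BB_zero_row {i : ℕ} (hi : m ≤ i) (ℓ : ℕ) : BB m n bot dd i ℓ = 0 := by
  unfold BB; rw [if_neg (by omega)]

lemma BB_rec {i ℓ : ℕ} (hi : i + 1 < m) (hℓ : ℓ ≤ n) :
    BB m n bot dd i ℓ = max (BB m n bot dd i (ℓ+1)) (BB m n bot dd (i+1) ℓ) + dd i ℓ := by
  unfold BB
  rw [if_pos (by omega : i < m), if_pos (by omega : i < m), if_pos (by omega : i + 1 < m)]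
  have h1 : m - 1 - i = (m - 1 - (i+1)) + 1 := by omega
  rw [h1, rowsB, stepFn_rec n _ _ hℓ]
  have h2 : m - 2 - (m - 1 - (i + 1)) = i := by omega
  rw [h2]

include hbot0 in
lemma BB_col_zero {ℓ : ℕ} (hℓ : n + 1 ≤ ℓ) (i : ℕ) : BB m n bot dd i ℓ = 0 := by
  unfold BB
  split
  · exact rowsB_zero n bot _ hbot0 _ ℓ hℓ
  · rfl

include hbota in
lemma BB_row_succ_le (i ℓ : ℕ) : BB m n bot dd i (ℓ+1) ≤ BB m n bot dd i ℓ := by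
  unfold BB
  split
  · exact rowsB_succ_le n bot _ hbota _ ℓ
  · exact le_refl 0

include hbota in
lemma BB_row_anti (i : ℕ) : Antitone (BB m n bot dd i) :=
  antitone_nat_of_succ_le (BB_row_succ_le m n bot dd hbota i)

include hbot0 in
lemma BB_col_succ_le (i ℓ : ℕ) : BB m n bot dd (i+1) ℓ ≤ BB m n bot dd i ℓ := by
  rcases lt_or_ge (i+1) m with h | h
  · unfold BB
    rw [if_pos (by omega : i + 1 < m), if_pos (by omega : i < m)]
    have h1 : m - 1 - i = (m - 1 - (i+1)) + 1 := by omega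
    rw [h1]
    exact rowsB_le_succ n bot _ hbot0 _ ℓ
  · rw [BB_zero_row m n bot dd (by omega : m ≤ i + 1)]
    exact Nat.zero_le _

include hbot0 in
lemma BB_col_anti (ℓ : ℕ) : Antitone (fun i => BB m n bot dd i ℓ) :=
  antitone_nat_of_succ_le (fun i => BB_col_succ_le m n bot dd hbot0 i ℓ)

end BB
/-! Entries from a B-matrix -/

def entB (n : ℕ) (B : ℕ → ℕ → ℕ) (i j : ℕ) : ℕ :=
  ((Finset.Icc 1 n).filter fun ℓ => j < B i ℓ).card

lemma entB_le_n (n : ℕ) (B : ℕ → ℕ → ℕ) (i j : ℕ) : entB n B i j ≤ n := by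
  have := Finset.card_le_card (Finset.filter_subset (fun ℓ => j < B i ℓ) (Finset.Icc 1 n))
  rwa [Nat.card_Icc, Nat.add_sub_cancel] at this

lemma entB_galois (n : ℕ) (B : ℕ → ℕ → ℕ) {i : ℕ} (hrow : Antitone (B i))
    {ℓ : ℕ} (h1 : 1 ≤ ℓ) (h2 : ℓ ≤ n) (j : ℕ) :
    ℓ ≤ entB n B i j ↔ j < B i ℓ := by
  have hdc : ∀ ℓ' ∈ (Finset.Icc 1 n).filter fun ℓ' => j < B i ℓ',
      ∀ ℓ'', 1 ≤ ℓ'' → ℓ'' ≤ ℓ' → ℓ'' ∈ (Finset.Icc 1 n).filter fun ℓ' => j < B i ℓ' := by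
    intro ℓ' hℓ' ℓ'' h1' h2'
    rw [Finset.mem_filter, Finset.mem_Icc] at *
    exact ⟨⟨h1', le_trans h2' hℓ'.1.2⟩, lt_of_lt_of_le hℓ'.2 (hrow h2')⟩
  have := icc_downset_mem_iff _ (Finset.filter_subset _ _) hdc (ℓ := ℓ) h1
  rw [Finset.mem_filter, Finset.mem_Icc] at this
  unfold entB
  rw [← this]
  simp [h1, h2]

lemma entB_pos_iff (n : ℕ) (B : ℕ → ℕ → ℕ) (i j : ℕ) :
    0 < entB n B i j ↔ ∃ ℓ, 1 ≤ ℓ ∧ ℓ ≤ n ∧ j < B i ℓ := by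
  unfold entB
  rw [Finset.card_pos, Finset.filter_nonempty_iff]
  simp only [Finset.mem_Icc]
  constructor
  · rintro ⟨ℓ, ⟨h1, h2⟩, h3⟩; exact ⟨ℓ, h1, h2, h3⟩
  · rintro ⟨ℓ, h1, h2, h3⟩; exact ⟨ℓ, ⟨h1, h2⟩, h3⟩

/-! The plane partition built from a B-matrix -/

section piB
variable (m n : ℕ) (bot : ℕ → ℕ) (dd : ℕ → ℕ → ℕ)
  (hbot0 : ∀ ℓ, n + 1 ≤ ℓ → bot ℓ = 0) (hbota : ∀ ℓ, bot (ℓ+1) ≤ bot ℓ)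

def piB : PlanePartition where
  entry i j := entB n (BB m n bot dd) i j
  finite_support := by
    apply Set.Finite.subset ((Finset.range m ×ˢ Finset.range (BB m n bot dd 0 1)).finite_toSet)
    intro p hp
    rw [Function.mem_support] at hp
    have hpos : 0 < entB n (BB m n bot dd) p.1 p.2 := Nat.pos_of_ne_zero hp
    rw [entB_pos_iff] at hpos
    obtain ⟨ℓ, h1, h2, h3⟩ := hpos
    have hi : p.1 < m := by
      by_contra h
      rw [BB_zero_row m n bot dd (by omega)] at h3
      omega
    have hj : p.2 < BB m n bot dd 0 1 := by
      calc p.2 < BB m n bot dd p.1 ℓ := h3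
      _ ≤ BB m n bot dd p.1 1 := BB_row_anti m n bot dd hbota p.1 h1
      _ ≤ BB m n bot dd 0 1 := BB_col_anti m n bot dd hbot0 1 (Nat.zero_le p.1)
    simp [Finset.mem_coe, Finset.mem_product, hi, hj]
  row_dec i j := by
    apply Finset.card_le_card
    intro ℓ hℓ
    rw [Finset.mem_filter] at *
    exact ⟨hℓ.1, by omega⟩
  col_dec i j := by
    apply Finset.card_le_card
    intro ℓ hℓ
    rw [Finset.mem_filter] at *
    exact ⟨hℓ.1, lt_of_lt_of_le hℓ.2 (BB_col_succ_le m n bot dd hbot0 i ℓ)⟩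

lemma piB_entry (i j : ℕ) :
    (piB m n bot dd hbot0 hbota).entry i j = entB n (BB m n bot dd) i j := rfl

include hbot0 hbota in
lemma piB_entry_eq_iff {ℓ : ℕ} (h1 : 1 ≤ ℓ) (h2 : ℓ ≤ n) (i j : ℕ) :
    (piB m n bot dd hbot0 hbota).entry i j = ℓ ↔
      BB m n bot dd i (ℓ+1) ≤ j ∧ j < BB m n bot dd i ℓ := by
  rw [piB_entry]
  have hg1 : ℓ ≤ entB n (BB m n bot dd) i j ↔ j < BB m n bot dd i ℓ :=
    entB_galois n _ (BB_row_anti m n bot dd hbota i) h1 h2 j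
  have hg2 : ℓ + 1 ≤ entB n (BB m n bot dd) i j ↔ j < BB m n bot dd i (ℓ+1) := by
    rcases le_or_gt (ℓ+1) n with h | h
    · exact entB_galois n _ (BB_row_anti m n bot dd hbota i) (by omega) h j
    · have hz : BB m n bot dd i (ℓ+1) = 0 := BB_col_zero m n bot dd hbot0 (by omega) i
      have hb := entB_le_n n (BB m n bot dd) i j
      rw [hz]
      constructor
      · intro hc; omega
      · intro hc; omega
  constructor
  · intro h
    constructor
    · by_contra hc
      push_neg at hc
      have := hg2.mpr hc
      omega
    · exact hg1.mp (by omega)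
  · intro ⟨ha, hb⟩
    have h3 := hg1.mpr hb
    have h4 : ¬ (ℓ + 1 ≤ entB n (BB m n bot dd) i j) := fun hc => by
      have := hg2.mp hc; omega
    omega

end piB
/-! shape and column counts of `piB` -/

lemma ncard_Ico (x y : ℕ) : (Set.Ico x y).ncard = y - x := by
  rw [← Finset.coe_Ico, Set.ncard_coe_finset, Nat.card_Ico]

section piBstats
variable (m n : ℕ) (bot : ℕ → ℕ) (dd : ℕ → ℕ → ℕ)
  (hbot0 : ∀ ℓ, n + 1 ≤ ℓ → bot ℓ = 0) (hbota : ∀ ℓ, bot (ℓ+1) ≤ bot ℓ)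

include hbot0 hbota in
lemma piB_part (k : ℕ) : part (piB m n bot dd hbot0 hbota) k = BB m n bot dd k 1 := by
  unfold part
  rcases Nat.eq_zero_or_pos n with hn | hn
  · have h1 : BB m n bot dd k 1 = 0 := BB_col_zero m n bot dd hbot0 (by omega) k
    have h2 : {j | 0 < (piB m n bot dd hbot0 hbota).entry k j} = ∅ := by
      ext j
      simp only [Set.mem_setOf_eq, Set.mem_empty_iff_false, iff_false, not_lt, Nat.le_zero]
      rw [piB_entry]
      unfold entB
      subst hn
      simp
    rw [h1, h2, Set.ncard_empty]
  · have h2 : {j | 0 < (piB m n bot dd hbot0 hbota).entry k j} = Set.Iio (BB m n bot dd k 1) := by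
      ext j
      simp only [Set.mem_setOf_eq, Set.mem_Iio]
      rw [piB_entry, entB_pos_iff]
      constructor
      · rintro ⟨ℓ, hℓ1, hℓ2, hℓ3⟩
        exact lt_of_lt_of_le hℓ3 (BB_row_anti m n bot dd hbota k hℓ1)
      · intro h
        exact ⟨1, le_refl 1, hn, h⟩
    rw [h2, ncard_Iio]

include hbot0 hbota in
lemma piB_colCount {ℓ : ℕ} (h1 : 1 ≤ ℓ) (h2 : ℓ ≤ n) :
    colCount (piB m n bot dd hbot0 hbota) ℓ =
      ∑ i ∈ Finset.range m,
        (BB m n bot dd i ℓ - max (BB m n bot dd i (ℓ+1)) (BB m n bot dd (i+1) ℓ)) := by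
  set B := BB m n bot dd with hB
  set U : ℕ → Set ℕ := fun k => {j | ∃ i, k ≤ i ∧ B i (ℓ+1) ≤ j ∧ j < B i ℓ} with hU
  have hsub : ∀ k, U k ⊆ Set.Iio (B k ℓ) := by
    rintro k j ⟨i, hik, _, hhi⟩
    exact lt_of_lt_of_le hhi (BB_col_anti m n bot dd hbot0 ℓ hik)
  have hfin : ∀ k, (U k).Finite := fun k => (Set.finite_Iio _).subset (hsub k)
  have main : ∀ t, (U (m - t)).ncard =
      ∑ i ∈ Finset.Ico (m - t) m, (B i ℓ - max (B i (ℓ+1)) (B (i+1) ℓ)) := by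
    intro t
    induction t with
    | zero =>
      have : U (m - 0) = ∅ := by
        ext j
        simp only [hU, Set.mem_setOf_eq, Set.mem_empty_iff_false, iff_false]
        rintro ⟨i, hik, _, hhi⟩
        rw [hB, BB_zero_row m n bot dd (by omega)] at hhi
        omega
      rw [this, Set.ncard_empty, Nat.sub_zero, Finset.Ico_self, Finset.sum_empty]
    | succ t ih =>
      rcases le_or_gt m t with hmt | hmt
      · have he : m - (t+1) = m - t := by omega
        rw [he]; exact ih
      · set k := m - (t + 1) with hk
        have hk1 : k + 1 = m - t := by omega
        have hkm : k < m := by omega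
        have hdecomp : U k = U (k+1) ∪ Set.Ico (max (B k (ℓ+1)) (B (k+1) ℓ)) (B k ℓ) := by
          ext j
          simp only [hU, Set.mem_setOf_eq, Set.mem_union, Set.mem_Ico]
          constructor
          · rintro ⟨i, hik, hlo, hhi⟩
            rcases lt_or_ge k i with h | h
            · exact Or.inl ⟨i, h, hlo, hhi⟩
            · have hik' : i = k := by omega
              rw [hik'] at hlo hhi
              rcases lt_or_ge j (B (k+1) ℓ) with h' | h'
              · refine Or.inl ⟨k+1, le_refl _, ?_, h'⟩
                exact le_trans (BB_col_succ_le m n bot dd hbot0 k (ℓ+1)) hlo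
              · exact Or.inr ⟨by omega, hhi⟩
          · rintro (⟨i, hik, hlo, hhi⟩ | ⟨hlo, hhi⟩)
            · exact ⟨i, by omega, hlo, hhi⟩
            · exact ⟨k, le_refl _, by omega, hhi⟩
        have hdisj : Disjoint (U (k+1)) (Set.Ico (max (B k (ℓ+1)) (B (k+1) ℓ)) (B k ℓ)) := by
          rw [Set.disjoint_left]
          intro j hj hj'
          have := hsub (k+1) hj
          simp only [Set.mem_Iio] at this
          simp only [Set.mem_Ico] at hj'
          omega
        rw [hdecomp, Set.ncard_union_eq hdisj (hfin (k+1)) (Set.finite_Ico _ _), ncard_Ico]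
        rw [Finset.sum_eq_sum_Ico_succ_bot hkm]
        rw [← hk1] at ih
        rw [ih]
        exact Nat.add_comm _ _
  have hset : {j | ∃ i, (piB m n bot dd hbot0 hbota).entry i j = ℓ} = U 0 := by
    ext j
    simp only [hU, Set.mem_setOf_eq]
    constructor
    · rintro ⟨i, hi⟩
      rw [piB_entry_eq_iff m n bot dd hbot0 hbota h1 h2] at hi
      exact ⟨i, Nat.zero_le i, hi.1, hi.2⟩
    · rintro ⟨i, _, hlo, hhi⟩
      exact ⟨i, (piB_entry_eq_iff m n bot dd hbot0 hbota h1 h2 i j).mpr ⟨hlo, hhi⟩⟩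
  unfold colCount
  rw [hset]
  have hmain := main m
  rw [Nat.sub_self] at hmain
  rw [hmain, ← Finset.range_eq_Ico]

end piBstats
/-! Conjugates of monotone words, and statistics of an abstract plane partition -/

def conjf {a n : ℕ} (f : Fin a → Fin n) : ℕ → ℕ :=
  fun ℓ => (Finset.univ.filter fun t => ℓ ≤ (f t : ℕ) + 1).card

lemma conjf_zero {a n : ℕ} (f : Fin a → Fin n) {ℓ : ℕ} (hℓ : n + 1 ≤ ℓ) : conjf f ℓ = 0 := by
  unfold conjf
  rw [Finset.card_eq_zero, Finset.filter_eq_empty_iff]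
  intro t _
  have := (f t).isLt
  omega

lemma conjf_anti {a n : ℕ} (f : Fin a → Fin n) (ℓ : ℕ) : conjf f (ℓ+1) ≤ conjf f ℓ := by
  apply Finset.card_le_card
  intro t ht
  rw [Finset.mem_filter] at *
  exact ⟨ht.1, by omega⟩

lemma conjf_one {a n : ℕ} (f : Fin a → Fin n) : conjf f 1 = a := by
  unfold conjf
  rw [Finset.filter_true_of_mem (fun t _ => by omega), Finset.card_univ, Fintype.card_fin]

def wordOf (a : ℕ) {n : ℕ} (f : Fin a → Fin n) : ℕ → ℕ :=
  fun j => if h : j < a then (f ⟨a-1-j, by omega⟩ : ℕ) + 1 else 0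

lemma wordOf_anti {a n : ℕ} (f : Fin a → Fin n) (hf : ∀ i j, i ≤ j → f i ≤ f j) :
    ∀ j, wordOf a f (j+1) ≤ wordOf a f j := by
  intro j
  unfold wordOf
  rcases lt_or_ge (j+1) a with h | h
  · rw [dif_pos h, dif_pos (by omega)]
    have := hf ⟨a-1-(j+1), by omega⟩ ⟨a-1-j, by omega⟩ (by simp [Fin.le_def]; omega)
    simp only [Fin.le_def] at this
    omega
  · rw [dif_neg (by omega)]
    exact Nat.zero_le _

lemma wordOf_le_n {a n : ℕ} (f : Fin a → Fin n) (j : ℕ) : wordOf a f j ≤ n := by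
  unfold wordOf
  split
  · next h => have := (f ⟨a-1-j, by omega⟩).isLt; omega
  · exact Nat.zero_le _

lemma wordOf_conj {a n : ℕ} (f : Fin a → Fin n) {ℓ : ℕ} (hℓ : 1 ≤ ℓ) :
    {j | ℓ ≤ wordOf a f j}.ncard = conjf f ℓ := by
  have hset : {j | ℓ ≤ wordOf a f j} = ↑((Finset.range a).filter fun j => ℓ ≤ wordOf a f j) := by
    ext j
    simp only [Set.mem_setOf_eq, Finset.coe_filter, Finset.mem_range, Set.mem_setOf_eq]
    constructor
    · intro h
      refine ⟨?_, h⟩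
      by_contra hc
      unfold wordOf at h
      rw [dif_neg hc] at h
      omega
    · exact fun h => h.2
  rw [hset, Set.ncard_coe_finset]
  unfold conjf
  apply Finset.card_bij (fun j hj => (⟨a - 1 - j, by
    simp only [Finset.mem_filter, Finset.mem_range] at hj; omega⟩ : Fin a))
  · intro j hj
    simp only [Finset.mem_filter, Finset.mem_range] at hj
    simp only [Finset.mem_filter, Finset.mem_univ, true_and]
    obtain ⟨hja, hw⟩ := hj
    unfold wordOf at hw
    rw [dif_pos hja] at hw
    exact hw
  · intro j1 hj1 j2 hj2 he
    simp only [Finset.mem_filter, Finset.mem_range] at hj1 hj2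
    have := Fin.mk.injEq (a - 1 - j1) _ (a - 1 - j2) _ ▸ he
    simp only [Fin.mk.injEq] at he
    omega
  · intro t ht
    simp only [Finset.mem_filter, Finset.mem_univ, true_and] at ht
    have hta : (t : ℕ) < a := t.isLt
    refine ⟨a - 1 - t, ?_, ?_⟩
    · simp only [Finset.mem_filter, Finset.mem_range]
      constructor
      · omega
      · unfold wordOf
        rw [dif_pos (by omega)]
        have : a - 1 - (a - 1 - (t:ℕ)) = (t:ℕ) := by omega
        simp only [this, Fin.eta]
        exact ht
    · have : a - 1 - (a - 1 - (t:ℕ)) = (t:ℕ) := by omega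
      simp only [this, Fin.eta]

lemma entry_formula (n : ℕ) (r : ℕ → ℕ) (hr : Antitone r)
    (hfin : ∀ ℓ, 1 ≤ ℓ → {j | ℓ ≤ r j}.Finite) (hbd : ∀ j, r j ≤ n) (j : ℕ) :
    ((Finset.Icc 1 n).filter fun ℓ => j < ({j' | ℓ ≤ r j'}).ncard).card = r j := by
  have hset : (Finset.Icc 1 n).filter (fun ℓ => j < ({j' | ℓ ≤ r j'}).ncard)
      = Finset.Icc 1 (r j) := by
    ext ℓ
    rw [Finset.mem_filter, Finset.mem_Icc, Finset.mem_Icc]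
    constructor
    · rintro ⟨⟨h1, _⟩, hj⟩
      exact ⟨h1, (row_galois r hr (hfin ℓ h1) j).mpr hj⟩
    · rintro ⟨h1, hle⟩
      exact ⟨⟨h1, le_trans hle (hbd j)⟩, (row_galois r hr (hfin ℓ h1) j).mp hle⟩
  rw [hset, Nat.card_Icc]
  omega

/-! statistics of an abstract plane partition -/

noncomputable def AE (π : PlanePartition) (i ℓ : ℕ) : ℕ := {j | ℓ ≤ π.entry i j}.ncard

lemma pp_row_anti (π : PlanePartition) (i : ℕ) : Antitone (π.entry i) :=
  antitone_nat_of_succ_le (π.row_dec i)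

lemma pp_col_anti (π : PlanePartition) (j : ℕ) : Antitone (fun i => π.entry i j) :=
  antitone_nat_of_succ_le (fun i => π.col_dec i j)

lemma pp_slice_fin (π : PlanePartition) (i : ℕ) {ℓ : ℕ} (hℓ : 1 ≤ ℓ) :
    {j | ℓ ≤ π.entry i j}.Finite := by
  apply Set.Finite.subset
    (π.finite_support.preimage (Set.injOn_of_injective (fun j j' h => by
      simpa using congrArg Prod.snd h : Function.Injective (fun j : ℕ => (i, j)))))
  intro j hj
  simp only [Set.mem_setOf_eq] at hj
  simp only [Set.mem_preimage, Function.mem_support]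
  omega

lemma AE_galois (π : PlanePartition) (i : ℕ) {ℓ : ℕ} (hℓ : 1 ≤ ℓ) (j : ℕ) :
    ℓ ≤ π.entry i j ↔ j < AE π i ℓ :=
  row_galois (π.entry i) (pp_row_anti π i) (pp_slice_fin π i hℓ) j

lemma AE_row_succ_le (π : PlanePartition) (i : ℕ) {ℓ : ℕ} (hℓ : 1 ≤ ℓ) :
    AE π i (ℓ+1) ≤ AE π i ℓ :=
  Set.ncard_le_ncard (fun j hj => by simp only [Set.mem_setOf_eq] at *; omega)
    (pp_slice_fin π i hℓ)

lemma AE_col_le (π : PlanePartition) (i : ℕ) {ℓ : ℕ} (hℓ : 1 ≤ ℓ) :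
    AE π (i+1) ℓ ≤ AE π i ℓ :=
  Set.ncard_le_ncard (fun j hj => by
    simp only [Set.mem_setOf_eq] at *
    exact le_trans hj (π.col_dec i j)) (pp_slice_fin π i hℓ)

lemma AE_zero (π : PlanePartition) {n : ℕ} (hbd : ∀ i j, π.entry i j ≤ n)
    (i : ℕ) {ℓ : ℕ} (hℓ : n + 1 ≤ ℓ) : AE π i ℓ = 0 := by
  unfold AE
  convert Set.ncard_empty ℕ
  ext j
  simp only [Set.mem_setOf_eq, Set.mem_empty_iff_false, iff_false, not_le]
  have := hbd i j
  omega

lemma pp_entry_eq_entB (π : PlanePartition) {n : ℕ} (hbd : ∀ i j, π.entry i j ≤ n)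
    (i j : ℕ) : π.entry i j = entB n (AE π) i j :=
  (entry_formula n (π.entry i) (pp_row_anti π i) (fun ℓ hℓ => pp_slice_fin π i hℓ)
    (hbd i) j).symm

lemma part_eq_AE_one (π : PlanePartition) (k : ℕ) : part π k = AE π k 1 := by
  rfl

lemma pp_entry_zero_of_part_zero (π : PlanePartition) {i : ℕ} (hp : part π i = 0) (j : ℕ) :
    π.entry i j = 0 := by
  have hfin : {j | 0 < π.entry i j}.Finite := pp_slice_fin π i (le_refl 1)
  have := (Set.ncard_eq_zero hfin).mp hp
  by_contra hc
  have : j ∈ {j | 0 < π.entry i j} := by simp only [Set.mem_setOf_eq]; omega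
  rw [‹{j | 0 < π.entry i j} = ∅›] at this
  exact this
/-! The main bijection -/

lemma pp_ext {π₁ π₂ : PlanePartition} (h : π₁.entry = π₂.entry) : π₁ = π₂ := by
  obtain ⟨e1, f1, r1, c1⟩ := π₁
  obtain ⟨e2, f2, r2, c2⟩ := π₂
  change e1 = e2 at h
  subst h
  rfl

section main
variable (m n a : ℕ)

def ddext (d : Fin (m-1) → Fin n → ℕ) : ℕ → ℕ → ℕ := fun i ℓ =>
  if hi : i < m - 1 then
    if hl : ℓ - 1 < n then (if 1 ≤ ℓ then d ⟨i, hi⟩ ⟨ℓ - 1, hl⟩ else 0) else 0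
  else 0

lemma ddext_eq (d : Fin (m-1) → Fin n → ℕ) {i ℓ : ℕ} (hi : i < m - 1) (h1 : 1 ≤ ℓ)
    (h2 : ℓ - 1 < n) : ddext m n d i ℓ = d ⟨i, hi⟩ ⟨ℓ - 1, h2⟩ := by
  unfold ddext
  rw [dif_pos hi, dif_pos h2, if_pos h1]

def DT := (Fin (m-1) → Fin n → ℕ) × {f : Fin a → Fin n // ∀ i j, i ≤ j → f i ≤ f j}

def LamT := {lam : ℕ → ℕ // IsPartWithParts m lam ∧ lam (m - 1) = a}

def STT := Σ lam : LamT m a,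
  {π : PlanePartition // HasShape π lam.1 ∧ ∀ i j, π.entry i j ≤ n}

lemma ST_ext (x y : STT m n a) (h : x.2.1 = y.2.1) : x = y := by
  obtain ⟨⟨lam1, h1⟩, ⟨π1, hp1⟩⟩ := x
  obtain ⟨⟨lam2, h2⟩, ⟨π2, hp2⟩⟩ := y
  dsimp at h
  subst h
  have hl : lam1 = lam2 := funext fun k => ((hp1.1 k).symm.trans (hp2.1 k))
  subst hl
  rfl

/-! Forward direction -/

variable {a n} in
lemma conjf_bot0 (f : Fin a → Fin n) : ∀ ℓ, n + 1 ≤ ℓ → conjf f ℓ = 0 :=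
  fun _ h => conjf_zero f h

variable {a n} in
lemma conjf_bota (f : Fin a → Fin n) : ∀ ℓ, conjf f (ℓ+1) ≤ conjf f ℓ :=
  fun ℓ => conjf_anti f ℓ

def piOf (d : Fin (m-1) → Fin n → ℕ) (f : Fin a → Fin n) : PlanePartition :=
  piB m n (conjf f) (ddext m n d) (conjf_bot0 f) (conjf_bota f)

def lamOf (d : Fin (m-1) → Fin n → ℕ) (f : Fin a → Fin n) : ℕ → ℕ :=
  fun k => BB m n (conjf f) (ddext m n d) k 1

lemma lamOf_prop (hm : 1 ≤ m) (d : Fin (m-1) → Fin n → ℕ) (f : Fin a → Fin n) :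
    IsPartWithParts m (lamOf m n a d f) ∧ lamOf m n a d f (m - 1) = a := by
  refine ⟨⟨BB_col_anti m n _ _ (conjf_bot0 f) 1, fun i hi => BB_zero_row m n _ _ hi 1⟩, ?_⟩
  rw [lamOf, BB_last m n _ _ hm, conjf_one]

lemma piOf_shape (d : Fin (m-1) → Fin n → ℕ) (f : Fin a → Fin n) :
    HasShape (piOf m n a d f) (lamOf m n a d f) :=
  fun k => piB_part m n _ _ _ _ k

lemma piOf_bdd (d : Fin (m-1) → Fin n → ℕ) (f : Fin a → Fin n) :
    ∀ i j, (piOf m n a d f).entry i j ≤ n :=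
  fun i j => entB_le_n n _ i j

noncomputable def fwd (hm : 1 ≤ m) (x : DT m n a) : STT m n a :=
  ⟨⟨lamOf m n a x.1 x.2.1, lamOf_prop m n a hm x.1 x.2.1⟩,
   ⟨piOf m n a x.1 x.2.1, piOf_shape m n a x.1 x.2.1, piOf_bdd m n a x.1 x.2.1⟩⟩

/-! Backward direction -/

noncomputable def dOf (π : PlanePartition) : Fin (m-1) → Fin n → ℕ :=
  fun i ℓ => AE π i ((ℓ:ℕ)+1) - max (AE π i ((ℓ:ℕ)+2)) (AE π ((i:ℕ)+1) ((ℓ:ℕ)+1))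

noncomputable def fOf (π : PlanePartition) (hbd : ∀ i j, π.entry i j ≤ n)
    (hpart : part π (m-1) = a) : Fin a → Fin n := fun t =>
  ⟨π.entry (m-1) (a-1-(t:ℕ)) - 1, by
    have h1 : 1 ≤ π.entry (m-1) (a-1-(t:ℕ)) := by
      rw [AE_galois π (m-1) (le_refl 1), ← part_eq_AE_one, hpart]
      have := t.isLt
      omega
    have h2 := hbd (m-1) (a-1-(t:ℕ))
    omega⟩

lemma fOf_mono (π : PlanePartition) (hbd : ∀ i j, π.entry i j ≤ n)
    (hpart : part π (m-1) = a) :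
    ∀ i j, i ≤ j → fOf m n a π hbd hpart i ≤ fOf m n a π hbd hpart j := by
  intro i j hij
  simp only [fOf, Fin.mk_le_mk]
  have := pp_row_anti π (m-1) (show a - 1 - (j:ℕ) ≤ a - 1 - (i:ℕ) by
    have := Fin.le_def.mp hij; omega)
  omega

end main
section main2
variable (m n a : ℕ)

lemma AE_piB (bot : ℕ → ℕ) (dd : ℕ → ℕ → ℕ)
    (hbot0 : ∀ ℓ, n + 1 ≤ ℓ → bot ℓ = 0) (hbota : ∀ ℓ, bot (ℓ+1) ≤ bot ℓ)
    (i : ℕ) {ℓ : ℕ} (hℓ : 1 ≤ ℓ) :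
    AE (piB m n bot dd hbot0 hbota) i ℓ = BB m n bot dd i ℓ := by
  rcases le_or_gt ℓ n with h | h
  · unfold AE
    have hset : {j | ℓ ≤ (piB m n bot dd hbot0 hbota).entry i j}
        = Set.Iio (BB m n bot dd i ℓ) := by
      ext j
      simp only [Set.mem_setOf_eq, Set.mem_Iio]
      rw [piB_entry]
      exact entB_galois n _ (BB_row_anti m n bot dd hbota i) hℓ h j
    rw [hset, ncard_Iio]
  · rw [BB_col_zero m n bot dd hbot0 (by omega) i]
    unfold AE
    convert Set.ncard_empty ℕ
    ext j
    simp only [Set.mem_setOf_eq, Set.mem_empty_iff_false, iff_false, not_le]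
    have h1 : (piB m n bot dd hbot0 hbota).entry i j ≤ n := entB_le_n n _ i j
    omega

lemma wordOf_fin {a n : ℕ} (f : Fin a → Fin n) {ℓ : ℕ} (hℓ : 1 ≤ ℓ) :
    {j | ℓ ≤ wordOf a f j}.Finite := by
  apply (Set.finite_Iio a).subset
  intro j hj
  simp only [Set.mem_setOf_eq] at hj
  simp only [Set.mem_Iio]
  by_contra hc
  unfold wordOf at hj
  rw [dif_neg (by omega)] at hj
  omega

lemma piOf_bottom (hm : 1 ≤ m) (d : Fin (m-1) → Fin n → ℕ) (f : Fin a → Fin n)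
    (hf : ∀ i j, i ≤ j → f i ≤ f j) (j : ℕ) :
    (piOf m n a d f).entry (m-1) j = wordOf a f j := by
  have hfilter : ((Finset.Icc 1 n).filter fun ℓ => j < BB m n (conjf f) (ddext m n d) (m-1) ℓ)
      = (Finset.Icc 1 n).filter fun ℓ => j < ({j' | ℓ ≤ wordOf a f j'}).ncard := by
    apply Finset.filter_congr
    intro ℓ hℓ
    rw [Finset.mem_Icc] at hℓ
    rw [BB_last m n _ _ hm, ← wordOf_conj f hℓ.1]
  show entB n (BB m n (conjf f) (ddext m n d)) (m-1) j = wordOf a f j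
  unfold entB
  rw [hfilter]
  exact entry_formula n (wordOf a f) (antitone_nat_of_succ_le (wordOf_anti f hf))
    (fun ℓ hℓ => wordOf_fin f hℓ) (wordOf_le_n f) j

lemma dOf_piOf (hm : 1 ≤ m) (d : Fin (m-1) → Fin n → ℕ) (f : Fin a → Fin n)
    (i : Fin (m-1)) (ℓ : Fin n) :
    dOf m n (piOf m n a d f) i ℓ = d i ℓ := by
  unfold dOf piOf
  rw [AE_piB m n _ _ _ _ _ (by omega : 1 ≤ (ℓ:ℕ)+1),
      AE_piB m n _ _ _ _ _ (by omega : 1 ≤ (ℓ:ℕ)+2),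
      AE_piB m n _ _ _ _ _ (by omega : 1 ≤ (ℓ:ℕ)+1)]
  have hi : (i:ℕ) + 1 < m := by have := i.isLt; omega
  have hl : (ℓ:ℕ) + 1 ≤ n := by have := ℓ.isLt; omega
  have hrec := BB_rec m n (conjf f) (ddext m n d) hi hl
  have hdd : ddext m n d (i:ℕ) ((ℓ:ℕ)+1) = d i ℓ := by
    rw [ddext_eq m n d i.isLt (by omega) (by simpa using ℓ.isLt)]
    simp
  rw [hdd, show (ℓ:ℕ)+1+1 = (ℓ:ℕ)+2 from by omega] at hrec
  omega

lemma fOf_piOf (hm : 1 ≤ m) (d : Fin (m-1) → Fin n → ℕ) (f : Fin a → Fin n)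
    (hf : ∀ i j, i ≤ j → f i ≤ f j)
    (hbd : ∀ i j, (piOf m n a d f).entry i j ≤ n)
    (hpart : part (piOf m n a d f) (m-1) = a) (t : Fin a) :
    fOf m n a (piOf m n a d f) hbd hpart t = f t := by
  apply Fin.ext
  show (piOf m n a d f).entry (m-1) (a-1-(t:ℕ)) - 1 = (f t : ℕ)
  rw [piOf_bottom m n a hm d f hf]
  unfold wordOf
  have hta := t.isLt
  rw [dif_pos (by omega : a - 1 - (t:ℕ) < a)]
  have he : a - 1 - (a - 1 - (t:ℕ)) = (t:ℕ) := by omega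
  simp only [he, Fin.eta]
  omega

end main2
section main3
variable (m n a : ℕ)

lemma AE_row_zero (π : PlanePartition) {i : ℕ} (hp : part π i = 0) {ℓ : ℕ} (hℓ : 1 ≤ ℓ) :
    AE π i ℓ = 0 := by
  unfold AE
  convert Set.ncard_empty ℕ
  ext j
  simp only [Set.mem_setOf_eq, Set.mem_empty_iff_false, iff_false, not_le]
  rw [pp_entry_zero_of_part_zero π hp j]
  omega

lemma conjf_fOf (π : PlanePartition) (hbd : ∀ i j, π.entry i j ≤ n)
    (hpart : part π (m-1) = a) {ℓ : ℕ} (hℓ : 1 ≤ ℓ) :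
    conjf (fOf m n a π hbd hpart) ℓ = AE π (m-1) ℓ := by
  have hval : ∀ t : Fin a, ((fOf m n a π hbd hpart t : ℕ)) + 1 = π.entry (m-1) (a-1-(t:ℕ)) := by
    intro t
    show π.entry (m-1) (a-1-(t:ℕ)) - 1 + 1 = _
    have h1 : 1 ≤ π.entry (m-1) (a-1-(t:ℕ)) := by
      rw [AE_galois π (m-1) (le_refl 1), ← part_eq_AE_one, hpart]
      have := t.isLt
      omega
    omega
  have hmem : ∀ j, ℓ ≤ π.entry (m-1) j → j < a := by
    intro j hj
    have h1 : 1 ≤ π.entry (m-1) j := by omega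
    rw [AE_galois π (m-1) (le_refl 1), ← part_eq_AE_one, hpart] at h1
    exact h1
  have hset : {j | ℓ ≤ π.entry (m-1) j}
      = ↑((Finset.range a).filter fun j => ℓ ≤ π.entry (m-1) j) := by
    ext j
    simp only [Set.mem_setOf_eq, Finset.coe_filter, Finset.mem_range, Set.mem_setOf_eq]
    exact ⟨fun h => ⟨hmem j h, h⟩, fun h => h.2⟩
  unfold AE
  rw [hset, Set.ncard_coe_finset]
  unfold conjf
  apply Finset.card_bij (fun t _ => a - 1 - (t : Fin a))
  · intro t ht
    simp only [Finset.mem_filter, Finset.mem_univ, true_and] at ht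
    simp only [Finset.mem_filter, Finset.mem_range]
    rw [hval t] at ht
    have := (t : Fin a).isLt
    exact ⟨by omega, ht⟩
  · intro t1 ht1 t2 ht2 he
    have h1 := (t1 : Fin a).isLt
    have h2 := (t2 : Fin a).isLt
    exact Fin.ext (by omega)
  · intro j hj
    simp only [Finset.mem_filter, Finset.mem_range] at hj
    refine ⟨⟨a - 1 - j, by omega⟩, ?_, by simp; omega⟩
    simp only [Finset.mem_filter, Finset.mem_univ, true_and]
    rw [hval]
    have he : a - 1 - (a - 1 - j) = j := by omega
    simp only [he]
    exact hj.2
end main3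
section main4
variable (m n a : ℕ)

lemma BB_eq_AE (hm : 1 ≤ m) (π : PlanePartition) (hbd : ∀ i j, π.entry i j ≤ n)
    (hzero : ∀ i, m ≤ i → part π i = 0) (hpart : part π (m-1) = a) :
    ∀ i ℓ, 1 ≤ ℓ →
      BB m n (conjf (fOf m n a π hbd hpart)) (ddext m n (dOf m n π)) i ℓ = AE π i ℓ := by
  set bot := conjf (fOf m n a π hbd hpart) with hbot
  set dd := ddext m n (dOf m n π) with hdd'
  have hbot0 : ∀ ℓ, n+1 ≤ ℓ → bot ℓ = 0 := conjf_bot0 _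
  have hAE0 : ∀ i ℓ, n+1 ≤ ℓ → AE π i ℓ = 0 := fun i ℓ h => AE_zero π hbd i h
  have outer : ∀ t, ∀ ℓ, 1 ≤ ℓ → BB m n bot dd (m-1-t) ℓ = AE π (m-1-t) ℓ := by
    intro t
    induction t with
    | zero =>
      intro ℓ hℓ
      rw [Nat.sub_zero, BB_last m n bot dd hm ℓ, hbot]
      exact conjf_fOf m n a π hbd hpart hℓ
    | succ t ih =>
      rcases le_or_gt (m-1) t with hmt | hmt
      · have he : m - 1 - (t+1) = m - 1 - t := by omega
        rw [he]; exact ih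
      · set i := m - 1 - (t+1) with hi
        have hi1 : i + 1 = m - 1 - t := by omega
        have him : i + 1 < m := by omega
        have inner : ∀ s ℓ, ℓ = n + 1 - s → 1 ≤ ℓ → BB m n bot dd i ℓ = AE π i ℓ := by
          intro s
          induction s with
          | zero =>
            intro ℓ hle hℓ
            have hl : ℓ = n + 1 := by omega
            rw [hl, BB_col_zero m n bot dd hbot0 (le_refl _) i, hAE0 i (n+1) (le_refl _)]
          | succ s ihs =>
            intro ℓ hle hℓ
            have hln : ℓ ≤ n := by omega
            rw [BB_rec m n bot dd him hln]
            rw [ihs (ℓ+1) (by omega) (by omega)]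
            have hcol := ih ℓ hℓ
            rw [← hi1] at hcol
            rw [hcol]
            have hdd : dd i ℓ = AE π i ℓ - max (AE π i (ℓ+1)) (AE π (i+1) ℓ) := by
              rw [hdd', ddext_eq m n _ (show i < m-1 by omega) hℓ (show ℓ-1 < n by omega)]
              show AE π i (ℓ-1+1) - max (AE π i (ℓ-1+2)) (AE π (i+1) (ℓ-1+1)) = _
              have e1 : ℓ - 1 + 1 = ℓ := by omega
              have e2 : ℓ - 1 + 2 = ℓ + 1 := by omega
              rw [e1, e2]
            rw [hdd]
            have h1 : AE π i (ℓ+1) ≤ AE π i ℓ := AE_row_succ_le π i hℓ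
            have h2 : AE π (i+1) ℓ ≤ AE π i ℓ := AE_col_le π i hℓ
            rcases le_total (AE π i (ℓ+1)) (AE π (i+1) ℓ) with h | h
            · rw [max_eq_right h]; omega
            · rw [max_eq_left h]; omega
        intro ℓ hℓ
        rcases le_or_gt ℓ (n+1) with h | h
        · exact inner (n+1-ℓ) ℓ (by omega) hℓ
        · rw [BB_col_zero m n bot dd hbot0 (by omega) i, hAE0 i ℓ (by omega)]
  intro i ℓ hℓ
  rcases lt_or_ge i m with h | h
  · have he : i = m - 1 - (m - 1 - i) := by omega
    rw [he]
    exact outer (m-1-i) ℓ hℓ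
  · rw [BB_zero_row m n bot dd h ℓ, AE_row_zero π (hzero i h) hℓ]

lemma piOf_right (hm : 1 ≤ m) (π : PlanePartition) (hbd : ∀ i j, π.entry i j ≤ n)
    (hzero : ∀ i, m ≤ i → part π i = 0) (hpart : part π (m-1) = a) :
    piOf m n a (dOf m n π) (fOf m n a π hbd hpart) = π := by
  apply pp_ext
  funext i j
  show entB n (BB m n (conjf (fOf m n a π hbd hpart)) (ddext m n (dOf m n π))) i j
    = π.entry i j
  rw [pp_entry_eq_entB π hbd i j]
  unfold entB
  congr 1
  apply Finset.filter_congr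
  intro ℓ hℓ
  rw [Finset.mem_Icc] at hℓ
  rw [BB_eq_AE m n a hm π hbd hzero hpart i ℓ hℓ.1]

noncomputable def bwd (y : STT m n a) : DT m n a :=
  (dOf m n y.2.1, ⟨fOf m n a y.2.1 y.2.2.2 ((y.2.2.1 (m-1)).trans y.1.2.2),
   fOf_mono m n a y.2.1 y.2.2.2 ((y.2.2.1 (m-1)).trans y.1.2.2)⟩)

noncomputable def mainEquiv (hm : 1 ≤ m) : DT m n a ≃ STT m n a where
  toFun := fwd m n a hm
  invFun := bwd m n a
  left_inv x := by
    obtain ⟨d, f, hf⟩ := x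
    refine Prod.ext ?_ (Subtype.ext ?_)
    · funext i ℓ
      exact dOf_piOf m n a hm d f i ℓ
    · funext t
      exact fOf_piOf m n a hm d f hf (piOf_bdd m n a d f)
        (((piOf_shape m n a d f) (m-1)).trans (lamOf_prop m n a hm d f).2) t
  right_inv y := by
    obtain ⟨⟨lam, hlam⟩, ⟨π, hπ⟩⟩ := y
    refine ST_ext m n a _ _ ?_
    exact piOf_right m n a hm π hπ.2 (fun i hi => (hπ.1 i).trans (hlam.1.2 i hi))
      ((hπ.1 (m-1)).trans hlam.2)

end main4
section weights
variable (m n a : ℕ)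

lemma colCount_fwd (hm : 1 ≤ m) (d : Fin (m-1) → Fin n → ℕ) (f : Fin a → Fin n)
    (ℓ : Fin n) :
    colCount (piOf m n a d f) ((ℓ:ℕ)+1) =
      (∑ i : Fin (m-1), d i ℓ) + (conjf f ((ℓ:ℕ)+1) - conjf f ((ℓ:ℕ)+2)) := by
  have h1 : 1 ≤ (ℓ:ℕ)+1 := by omega
  have h2 : (ℓ:ℕ)+1 ≤ n := by have := ℓ.isLt; omega
  show colCount (piB m n (conjf f) (ddext m n d) (conjf_bot0 f) (conjf_bota f)) ((ℓ:ℕ)+1) = _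
  rw [piB_colCount m n (conjf f) (ddext m n d) (conjf_bot0 f) (conjf_bota f) h1 h2]
  set B := BB m n (conjf f) (ddext m n d) with hB
  set g : ℕ → ℕ := fun i => B i ((ℓ:ℕ)+1) - max (B i ((ℓ:ℕ)+1+1)) (B (i+1) ((ℓ:ℕ)+1)) with hg
  have hsum : ∑ i ∈ Finset.range m, g i = (∑ i ∈ Finset.range (m-1), g i) + g (m-1) := by
    conv_lhs => rw [show m = m - 1 + 1 from by omega]
    exact Finset.sum_range_succ g (m-1)
  have hlast : g (m-1) = conjf f ((ℓ:ℕ)+1) - conjf f ((ℓ:ℕ)+2) := by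
    rw [hg]
    dsimp only
    rw [hB, BB_last m n _ _ hm, BB_last m n _ _ hm,
      BB_zero_row m n _ _ (show m ≤ m - 1 + 1 by omega)]
    rw [show (ℓ:ℕ)+1+1 = (ℓ:ℕ)+2 from by omega]
    rw [Nat.max_zero]
  have hterm : ∀ i ∈ Finset.range (m-1), g i = ddext m n d i ((ℓ:ℕ)+1) := by
    intro i hi
    rw [Finset.mem_range] at hi
    have hrec := BB_rec m n (conjf f) (ddext m n d) (show i+1 < m by omega) h2
    rw [← hB] at hrec
    rw [hg]
    dsimp only
    omega
  rw [hsum, hlast, Finset.sum_congr rfl hterm]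
  congr 1
  rw [← Fin.sum_univ_eq_sum_range (fun i => ddext m n d i ((ℓ:ℕ)+1)) (m-1)]
  apply Finset.sum_congr rfl
  intro i _
  rw [ddext_eq m n d i.isLt (by omega) (by simpa using ℓ.isLt)]
  simp

end weights

lemma mult_card {a n : ℕ} (f : Fin a → Fin n) (v : Fin n) :
    conjf f ((v:ℕ)+1) - conjf f ((v:ℕ)+2)
      = (Finset.univ.filter fun t => f t = v).card := by
  unfold conjf
  have hsplit : (Finset.univ.filter fun t => (v:ℕ)+1 ≤ (f t : ℕ)+1)
      = (Finset.univ.filter fun t => (v:ℕ)+2 ≤ (f t : ℕ)+1)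
        ∪ (Finset.univ.filter fun t => f t = v) := by
    ext t
    simp only [Finset.mem_filter, Finset.mem_univ, true_and, Finset.mem_union]
    constructor
    · intro h
      rcases le_or_gt ((v:ℕ)+2) ((f t : ℕ)+1) with h' | h'
      · left; exact h'
      · right; exact Fin.ext (by omega)
    · rintro (h | h)
      · omega
      · rw [h]
  have hdisj : Disjoint (Finset.univ.filter fun t => (v:ℕ)+2 ≤ (f t : ℕ)+1)
      (Finset.univ.filter fun t => f t = v) := by
    rw [Finset.disjoint_left]
    intro t ht1 ht2
    simp only [Finset.mem_filter, Finset.mem_univ, true_and] at ht1 ht2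
    rw [ht2] at ht1
    omega
  have hle := Finset.card_le_card (fun t (ht : t ∈ Finset.univ.filter
    fun t => (v:ℕ)+2 ≤ (f t : ℕ)+1) => by
      simp only [Finset.mem_filter, Finset.mem_univ, true_and] at *
      omega : (Finset.univ.filter fun t => (v:ℕ)+2 ≤ (f t : ℕ)+1)
        ⊆ Finset.univ.filter fun t => (v:ℕ)+1 ≤ (f t : ℕ)+1)
  rw [hsplit, Finset.card_union_of_disjoint hdisj]
  omega

lemma prod_fiber {a n : ℕ} {M : Type*} [CommMonoid M] (f : Fin a → Fin n) (Q : Fin n → M) :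
    ∏ t : Fin a, Q (f t)
      = ∏ v : Fin n, Q v ^ (Finset.univ.filter fun t => f t = v).card := by
  rw [Finset.prod_comp Q f]
  apply Finset.prod_subset (Finset.subset_univ _)
  intro v _ hv
  have : (Finset.univ.filter fun t => f t = v) = ∅ := by
    rw [Finset.filter_eq_empty_iff]
    intro t _
    intro hc
    exact hv (Finset.mem_image.mpr ⟨t, Finset.mem_univ t, hc⟩)
  rw [this, Finset.card_empty, pow_zero]
/-! tsum machinery -/

open scoped ENNReal

lemma tsum_pi_prod : ∀ {k : ℕ} (α : Fin k → Type) (F : ∀ i, α i → ℝ≥0∞),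
    (∑' g : (∀ i, α i), ∏ i, F i (g i)) = ∏ i, ∑' x : α i, F i x := by
  intro k
  induction k with
  | zero =>
    intro α F
    have hu : Unique (∀ i : Fin 0, α i) := ⟨⟨fun i => i.elim0⟩, fun g => funext fun i => i.elim0⟩
    simp only [Finset.univ_eq_empty, Finset.prod_empty]
    rw [tsum_eq_single (hu.default) (fun b' hb => absurd (Subsingleton.elim b' hu.default) hb)]
  | succ k ih =>
    intro α F
    rw [← (Fin.consEquiv α).tsum_eq, ENNReal.tsum_prod']
    have hsplit : ∀ (x : α 0) (g : ∀ i : Fin k, α i.succ),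
        (∏ i, F i ((Fin.consEquiv α) (x, g) i))
          = F 0 x * ∏ i : Fin k, F i.succ (g i) := by
      intro x g
      rw [Fin.prod_univ_succ]
      simp [Fin.consEquiv]
    simp_rw [hsplit]
    simp_rw [ENNReal.tsum_mul_left]
    rw [ENNReal.tsum_mul_right]
    rw [ih (fun i => α i.succ) (fun i x => F i.succ x)]
    rw [Fin.prod_univ_succ]

lemma tsum_toReal_ofReal {ι : Type*} (f : ι → ℝ) (hf : ∀ x, 0 ≤ f x) :
    ∑' x, f x = (∑' x, ENNReal.ofReal (f x)).toReal := by
  by_cases h : Summable f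
  · rw [← ENNReal.ofReal_tsum_of_nonneg hf h, ENNReal.toReal_ofReal (tsum_nonneg hf)]
  · rw [tsum_eq_zero_of_not_summable h]
    have ht : (∑' x, ENNReal.ofReal (f x)) = ⊤ := by
      by_contra hc
      apply h
      have hs := ENNReal.summable_toReal hc
      exact (summable_congr (fun x => (ENNReal.toReal_ofReal (hf x)))).mp hs
    rw [ht]
    simp
open scoped ENNReal

/-- `Σ_{λ ∈ P_m, λ_m = a} g_λ(q_1,…,q_n)
= ∏_i (1 - q_i)^{1-m} ⋅ h_a(q_1,…,q_n)`. -/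
theorem stmt14 (m n a : ℕ) (hm : 1 ≤ m)
    (q : Fin n → ℝ) (hq : ∀ i, 0 < q i ∧ q i < 1) :
    ∑' lam : {lam : ℕ → ℕ // IsPartWithParts m lam ∧ lam (m - 1) = a},
        dualG lam.1 n q =
      (∏ i : Fin n, (1 - q i) ^ (1 - (m : ℤ))) * hpoly a n q := by
  classical
  have hq0 : ∀ i, 0 ≤ q i := fun i => (hq i).1.le
  set Q : Fin n → ℝ≥0∞ := fun ℓ => ENNReal.ofReal (q ℓ) with hQ
  set I : {lam : ℕ → ℕ // IsPartWithParts m lam ∧ lam (m - 1) = a} → ℝ≥0∞ := fun lam =>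
    ∑' π : {π : PlanePartition // HasShape π lam.1 ∧ ∀ i j, π.entry i j ≤ n},
      ∏ ℓ : Fin n, Q ℓ ^ colCount π.1 ((ℓ:ℕ)+1) with hI
  have hdualG : ∀ lam, dualG lam.1 n q = (I lam).toReal := by
    intro lam
    rw [dualG, tsum_toReal_ofReal _
      (fun π => Finset.prod_nonneg (fun ℓ _ => pow_nonneg (hq0 ℓ) _))]
    congr 1
    apply tsum_congr
    intro π
    rw [ENNReal.ofReal_prod_of_nonneg (fun ℓ _ => pow_nonneg (hq0 ℓ) _)]
    exact Finset.prod_congr rfl (fun ℓ _ => ENNReal.ofReal_pow (hq0 ℓ) _)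
  set S : ℝ≥0∞ := ∑' lam, I lam with hS
  have hsigma : S = ∑' st : STT m n a, ∏ ℓ : Fin n, Q ℓ ^ colCount st.2.1 ((ℓ:ℕ)+1) :=
    (ENNReal.tsum_sigma'
      (fun st : Σ lam : {lam : ℕ → ℕ // IsPartWithParts m lam ∧ lam (m - 1) = a},
          {π : PlanePartition // HasShape π lam.1 ∧ ∀ i j, π.entry i j ≤ n} =>
        ∏ ℓ : Fin n, Q ℓ ^ colCount st.2.1 ((ℓ:ℕ)+1))).symm
  have hequiv : (∑' st : STT m n a, ∏ ℓ : Fin n, Q ℓ ^ colCount st.2.1 ((ℓ:ℕ)+1))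
      = ∑' x : DT m n a,
          ∏ ℓ : Fin n, Q ℓ ^ colCount (piOf m n a x.1 x.2.1) ((ℓ:ℕ)+1) :=
    ((mainEquiv m n a hm).tsum_eq
      (fun st : STT m n a => ∏ ℓ : Fin n, Q ℓ ^ colCount st.2.1 ((ℓ:ℕ)+1))).symm
  have hweight : ∀ (dm : Fin (m-1) → Fin n → ℕ) (f : Fin a → Fin n),
      (∏ ℓ : Fin n, Q ℓ ^ colCount (piOf m n a dm f) ((ℓ:ℕ)+1))
      = (∏ i : Fin (m-1), ∏ ℓ : Fin n, Q ℓ ^ dm i ℓ) * ∏ t : Fin a, Q (f t) := by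
    intro dm f
    calc ∏ ℓ : Fin n, Q ℓ ^ colCount (piOf m n a dm f) ((ℓ:ℕ)+1)
        = ∏ ℓ : Fin n, ((Q ℓ ^ ∑ i : Fin (m-1), dm i ℓ)
            * Q ℓ ^ (Finset.univ.filter fun t => f t = ℓ).card) := by
          apply Finset.prod_congr rfl
          intro ℓ _
          rw [colCount_fwd m n a hm dm f ℓ, mult_card f ℓ, pow_add]
      _ = (∏ ℓ : Fin n, Q ℓ ^ ∑ i : Fin (m-1), dm i ℓ)
            * ∏ ℓ : Fin n, Q ℓ ^ (Finset.univ.filter fun t => f t = ℓ).card :=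
          Finset.prod_mul_distrib
      _ = (∏ i : Fin (m-1), ∏ ℓ : Fin n, Q ℓ ^ dm i ℓ) * ∏ t : Fin a, Q (f t) := by
          rw [← prod_fiber f Q]
          congr 1
          rw [Finset.prod_comm]
          apply Finset.prod_congr rfl
          intro ℓ _
          exact (Finset.prod_pow_eq_pow_sum _ _ _).symm
  have hDT : (∑' x : DT m n a,
        (∏ i : Fin (m-1), ∏ ℓ : Fin n, Q ℓ ^ x.1 i ℓ) * ∏ t : Fin a, Q (x.2.1 t))
      = (∑' dm : Fin (m-1) → Fin n → ℕ, ∏ i : Fin (m-1), ∏ ℓ : Fin n, Q ℓ ^ dm i ℓ)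
        * (∑' fs : {f : Fin a → Fin n // ∀ i j, i ≤ j → f i ≤ f j},
            ∏ t : Fin a, Q (fs.1 t)) := by
    rw [show (∑' x : DT m n a,
        (∏ i : Fin (m-1), ∏ ℓ : Fin n, Q ℓ ^ x.1 i ℓ) * ∏ t : Fin a, Q (x.2.1 t))
      = ∑' dm : Fin (m-1) → Fin n → ℕ,
          ∑' fs : {f : Fin a → Fin n // ∀ i j, i ≤ j → f i ≤ f j},
          (∏ i : Fin (m-1), ∏ ℓ : Fin n, Q ℓ ^ dm i ℓ) * ∏ t : Fin a, Q (fs.1 t)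
      from ENNReal.tsum_prod']
    simp_rw [ENNReal.tsum_mul_left]
    rw [ENNReal.tsum_mul_right]
  have hdsum : (∑' dm : Fin (m-1) → Fin n → ℕ, ∏ i : Fin (m-1), ∏ ℓ : Fin n, Q ℓ ^ dm i ℓ)
      = ∏ _i : Fin (m-1), ∏ ℓ : Fin n, (1 - Q ℓ)⁻¹ := by
    rw [tsum_pi_prod (fun _ : Fin (m-1) => Fin n → ℕ)
      (fun _ row => ∏ ℓ : Fin n, Q ℓ ^ row ℓ)]
    apply Finset.prod_congr rfl
    intro i _
    rw [tsum_pi_prod (fun _ : Fin n => ℕ) (fun ℓ x => Q ℓ ^ x)]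
    exact Finset.prod_congr rfl (fun ℓ _ => ENNReal.tsum_geometric (Q ℓ))
  have hfsum : (∑' fs : {f : Fin a → Fin n // ∀ i j, i ≤ j → f i ≤ f j},
        ∏ t : Fin a, Q (fs.1 t))
      = ∑ f ∈ Finset.univ.filter (fun f : Fin a → Fin n => ∀ i j, i ≤ j → f i ≤ f j),
          ∏ t : Fin a, Q (f t) := by
    rw [tsum_fintype]
    rw [← Finset.sum_subtype (Finset.univ.filter
        (fun f : Fin a → Fin n => ∀ i j, i ≤ j → f i ≤ f j))
      (fun f => by simp only [Finset.mem_filter, Finset.mem_univ, true_and])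
      (fun f => ∏ t : Fin a, Q (f t))]
  have hSval : S = (∏ _i : Fin (m-1), ∏ ℓ : Fin n, (1 - Q ℓ)⁻¹)
      * ∑ f ∈ Finset.univ.filter (fun f : Fin a → Fin n => ∀ i j, i ≤ j → f i ≤ f j),
          ∏ t : Fin a, Q (f t) := by
    rw [hsigma, hequiv]
    rw [tsum_congr (fun x : DT m n a => hweight x.1 x.2.1)]
    rw [hDT, hdsum, hfsum]
  have hQ1 : ∀ ℓ, Q ℓ < 1 := fun ℓ => ENNReal.ofReal_lt_one.mpr (hq ℓ).2
  have hQne : ∀ ℓ : Fin n, (1 - Q ℓ) ≠ 0 := by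
    intro ℓ h
    exact absurd (tsub_eq_zero_iff_le.mp h) (not_le.mpr (hQ1 ℓ))
  have hfac_ne : (∏ _i : Fin (m-1), ∏ ℓ : Fin n, (1 - Q ℓ)⁻¹) ≠ ⊤ :=
    ENNReal.prod_ne_top (fun i _ => ENNReal.prod_ne_top
      (fun ℓ _ => ENNReal.inv_ne_top.mpr (hQne ℓ)))
  have hHf_ne : (∑ f ∈ Finset.univ.filter
        (fun f : Fin a → Fin n => ∀ i j, i ≤ j → f i ≤ f j),
        ∏ t : Fin a, Q (f t)) ≠ ⊤ := by
    have h := ENNReal.sum_lt_top (s := Finset.univ.filter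
      (fun f : Fin a → Fin n => ∀ i j, i ≤ j → f i ≤ f j))
      (f := fun f => ∏ t : Fin a, Q (f t))
    refine (h.mpr (fun f _ => ?_)).ne
    exact (ENNReal.prod_ne_top (fun t _ => ENNReal.ofReal_ne_top)).lt_top
  have hS_ne : S ≠ ⊤ := by
    rw [hSval]
    exact ENNReal.mul_ne_top hfac_ne hHf_ne
  have hLHS : (∑' lam : {lam : ℕ → ℕ // IsPartWithParts m lam ∧ lam (m - 1) = a},
      dualG lam.1 n q) = S.toReal := by
    rw [tsum_congr (fun lam => hdualG lam)]
    rw [tsum_toReal_ofReal _ (fun lam => ENNReal.toReal_nonneg)]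
    congr 1
    apply tsum_congr
    intro lam
    exact ENNReal.ofReal_toReal (ne_top_of_le_ne_top hS_ne (ENNReal.le_tsum lam))
  rw [hLHS, hSval, ENNReal.toReal_mul]
  congr 1
  · have hQt : ∀ ℓ : Fin n, ((1 - Q ℓ)⁻¹).toReal = (1 - q ℓ)⁻¹ := by
      intro ℓ
      rw [ENNReal.toReal_inv]
      congr 1
      rw [hQ]
      dsimp only
      rw [← ENNReal.ofReal_one, ← ENNReal.ofReal_sub 1 (hq0 ℓ)]
      exact ENNReal.toReal_ofReal (by have := (hq ℓ).2; linarith)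
    rw [ENNReal.toReal_prod]
    calc ∏ _i : Fin (m-1), (∏ ℓ : Fin n, (1 - Q ℓ)⁻¹).toReal
        = ∏ _i : Fin (m-1), (∏ ℓ : Fin n, (1 - q ℓ)⁻¹) := by
          apply Finset.prod_congr rfl
          intro i _
          rw [ENNReal.toReal_prod]
          exact Finset.prod_congr rfl (fun ℓ _ => hQt ℓ)
      _ = (∏ ℓ : Fin n, (1 - q ℓ)⁻¹) ^ (m-1) := by
          rw [Finset.prod_const, Finset.card_univ, Fintype.card_fin]
      _ = ∏ ℓ : Fin n, ((1 - q ℓ)⁻¹) ^ (m-1) := by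
          rw [← Finset.prod_pow]
      _ = ∏ i : Fin n, (1 - q i) ^ (1 - (m:ℤ)) := by
          apply Finset.prod_congr rfl
          intro ℓ _
          have hmz : (1 : ℤ) - (m:ℤ) = -(((m - 1 : ℕ)) : ℤ) := by omega
          rw [hmz, zpow_neg, zpow_natCast, inv_pow]
  · rw [ENNReal.toReal_sum
      (fun f _ => ENNReal.prod_ne_top (fun t _ => ENNReal.ofReal_ne_top))]
    rw [hpoly]
    apply Finset.sum_congr rfl
    intro f _
    rw [ENNReal.toReal_prod]
    exact Finset.prod_congr rfl (fun t _ => ENNReal.toReal_ofReal (hq0 (f t)))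
end

section
/- For fixed m and n, the function assigning to each partition λ ⊆ (n^m) the value f_λ(n)/m^n, where f_λ(n) is the number of strict tableaux of shape λ with content [n], defines a probability measure: Σ_{λ ⊆ (n^m)} f_λ(n) = m^n. -/
open scoped BigOperators

set_option linter.dupNamespace false

namespace Stmt19


lemma pp_ext {π π' : PlanePartition} (h : π.entry = π'.entry) : π = π' := by
  cases π; cases π'; simpa using h

lemma entry_anti_row (π : PlanePartition) (i : ℕ) : Antitone (fun j => π.entry i j) :=
  antitone_nat_of_succ_le fun j => π.row_dec i j

lemma entry_anti_col (π : PlanePartition) (j : ℕ) : Antitone (fun i => π.entry i j) :=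
  antitone_nat_of_succ_le fun i => π.col_dec i j

lemma downset_iff {S : Finset ℕ} (hdc : ∀ a b, a ≤ b → b ∈ S → a ∈ S) (x : ℕ) :
    x ∈ S ↔ x < S.card := by
  constructor
  · intro hx
    have hsub : Finset.range (x + 1) ⊆ S := fun a ha =>
      hdc a x (Nat.lt_succ_iff.mp (Finset.mem_range.mp ha)) hx
    have := Finset.card_le_card hsub
    simpa [Finset.card_range, Nat.succ_le_iff] using this
  · intro hx
    by_contra hxS
    have hsub : S ⊆ Finset.range x := fun a ha => Finset.mem_range.mpr (by
      by_contra h; push_neg at h; exact hxS (hdc x a h ha))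
    have := Finset.card_le_card hsub
    simp only [Finset.card_range] at this
    omega

/-- Insert a new column of height `b+1` at the least column whose current
height is at most `b`. -/
def insC (h : ℕ → ℕ) (b : ℕ) : ℕ → ℕ := fun j =>
  if (∀ j' < j, b < h j') ∧ h j ≤ b then b + 1 else h j

lemma insC_spec (h : ℕ → ℕ) (b : ℕ) (jw : ℕ) (hw : h jw ≤ b) :
    ∃ js ≤ jw, h js ≤ b ∧ (∀ j' < js, b < h j') ∧ insC h b js = b + 1 ∧
      (∀ j, j ≠ js → insC h b j = h j) := by
  classical
  have hex : ∃ j, h j ≤ b := ⟨jw, hw⟩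
  have hmin : ∀ j' < Nat.find hex, b < h j' := fun j' hj' => by
    have := Nat.find_min hex hj'; omega
  refine ⟨Nat.find hex, Nat.find_min' hex hw, Nat.find_spec hex, hmin, ?_, ?_⟩
  · simp only [insC]; rw [if_pos ⟨hmin, Nat.find_spec hex⟩]
  · intro j hj
    simp only [insC]
    rw [if_neg]
    rintro ⟨h1, h2⟩
    have h3 : Nat.find hex ≤ j := Nat.find_min' hex h2
    rcases lt_or_eq_of_le h3 with h4 | h4
    · exact absurd (Nat.find_spec hex) (by have := h1 _ h4; omega)
    · exact hj h4.symm



/-- Heights of the diagram after inserting the `k` largest values `n, n-1, …, n-k+1`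
with prescribed bottom rows `b`. -/
def bld (m n : ℕ) (b : Fin n → Fin m) : ℕ → ℕ → ℕ
  | 0 => fun _ => 0
  | k + 1 => if hk : k < n then
      insC (bld m n b k) ((b ⟨n - 1 - k, by omega⟩ : Fin m).1)
    else bld m n b k

lemma bld_inv (m n : ℕ) (b : Fin n → Fin m) (k : ℕ) (hk : k ≤ n) :
    Antitone (bld m n b k) ∧ (∀ j, bld m n b k j ≤ m) ∧
      (∀ j, k ≤ j → bld m n b k j = 0) := by
  induction k with
  | zero => exact ⟨fun _ _ _ => le_rfl, fun j => Nat.zero_le m, fun j _ => rfl⟩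
  | succ k ih =>
    have hkn : k < n := hk
    obtain ⟨hanti, hlem, hzero⟩ := ih (le_of_lt hkn)
    set h := bld m n b k with hh
    set bv := ((b ⟨n - 1 - k, by omega⟩ : Fin m).1) with hbv
    have hbvm : bv < m := (b ⟨n - 1 - k, by omega⟩).2
    have hwk : h k ≤ bv := by rw [hzero k le_rfl]; exact Nat.zero_le _
    obtain ⟨js, hjsk, hjs, hjsmin, hjseq, hjsne⟩ := insC_spec h bv k hwk
    have hstep : bld m n b (k + 1) = insC h bv := by
      simp [bld, hkn, hh, hbv]
    rw [hstep]
    refine ⟨?_, ?_, ?_⟩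
    · apply antitone_nat_of_succ_le
      intro j
      by_cases h1 : j + 1 = js
      · have e1 : insC h bv (j + 1) = bv + 1 := by rw [h1, hjseq]
        have e2 : insC h bv j = h j := hjsne j (by omega)
        have e3 : bv < h j := hjsmin j (by omega)
        omega
      · have e1 : insC h bv (j + 1) = h (j + 1) := hjsne _ h1
        by_cases h2 : j = js
        · have e2 : insC h bv j = bv + 1 := by rw [h2, hjseq]
          have e3 : h (j + 1) ≤ h js := hanti (by omega)
          omega
        · have e2 : insC h bv j = h j := hjsne _ h2
          have e3 : h (j + 1) ≤ h j := hanti (Nat.le_succ j)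
          omega
    · intro j
      by_cases h1 : j = js
      · rw [h1, hjseq]; omega
      · rw [hjsne _ h1]; exact hlem j
    · intro j hj
      have h1 : j ≠ js := by omega
      rw [hjsne _ h1]
      exact hzero j (by omega)

lemma bld_le_succ (m n : ℕ) (b : Fin n → Fin m) (k : ℕ) (hk : k < n) (j : ℕ) :
    bld m n b k j ≤ bld m n b (k + 1) j := by
  obtain ⟨hanti, hlem, hzero⟩ := bld_inv m n b k (le_of_lt hk)
  set h := bld m n b k with hh
  set bv := ((b ⟨n - 1 - k, by omega⟩ : Fin m).1) with hbv
  have hwk : h k ≤ bv := by rw [hzero k le_rfl]; exact Nat.zero_le _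
  obtain ⟨js, hjsk, hjs, hjsmin, hjseq, hjsne⟩ := insC_spec h bv k hwk
  have hstep : bld m n b (k + 1) = insC h bv := by simp [bld, hk, hh, hbv]
  rw [hstep]
  by_cases h1 : j = js
  · rw [h1, hjseq]; omega
  · rw [hjsne _ h1]

lemma bld_mono (m n : ℕ) (b : Fin n → Fin m) {k k' : ℕ} (hkk : k ≤ k') (hk' : k' ≤ n)
    (j : ℕ) : bld m n b k j ≤ bld m n b k' j := by
  induction k' with
  | zero => simp_all
  | succ k' ih =>
    rcases Nat.lt_or_ge k (k' + 1) with h1 | h1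
    · exact le_trans (ih (by omega) (by omega)) (bld_le_succ m n b k' (by omega) j)
    · have : k = k' + 1 := by omega
      rw [this]


/-- Entry of the tableau built from bottom-row data `b`. -/
def GPentry (m n : ℕ) (b : Fin n → Fin m) (i j : ℕ) : ℕ :=
  ((Finset.range n).filter (fun t => i < bld m n b (n - t) j)).card

lemma GPentry_le_n (m n : ℕ) (b : Fin n → Fin m) (i j : ℕ) :
    GPentry m n b i j ≤ n := by
  have := Finset.card_filter_le (Finset.range n) (fun t => i < bld m n b (n - t) j)
  simpa [GPentry] using this

lemma GPentry_ge_iff (m n : ℕ) (b : Fin n → Fin m) (i j : ℕ) {ℓ : ℕ}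
    (hℓ1 : 1 ≤ ℓ) (hℓ2 : ℓ ≤ n + 1) :
    ℓ ≤ GPentry m n b i j ↔ i < bld m n b (n + 1 - ℓ) j := by
  rcases Nat.lt_or_ge ℓ (n + 1) with hc | hc
  · have hdc : ∀ a c, a ≤ c →
        c ∈ (Finset.range n).filter (fun t => i < bld m n b (n - t) j) →
        a ∈ (Finset.range n).filter (fun t => i < bld m n b (n - t) j) := by
      intro a c hac hcmem
      simp only [Finset.mem_filter, Finset.mem_range] at hcmem ⊢
      refine ⟨by omega, lt_of_lt_of_le hcmem.2 (bld_mono m n b (by omega) (by omega) j)⟩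
    have key := downset_iff hdc (ℓ - 1)
    simp only [Finset.mem_filter, Finset.mem_range] at key
    have h2 : n - (ℓ - 1) = n + 1 - ℓ := by omega
    rw [h2] at key
    unfold GPentry
    omega
  · have hℓ : ℓ = n + 1 := by omega
    subst hℓ
    have h1 : n + 1 - (n + 1) = 0 := by omega
    rw [h1]
    have := GPentry_le_n m n b i j
    simp [bld]
    omega

lemma GPentry_val_iff (m n : ℕ) (b : Fin n → Fin m) (i j : ℕ) {ℓ : ℕ}
    (hℓ1 : 1 ≤ ℓ) (hℓ2 : ℓ ≤ n) :
    GPentry m n b i j = ℓ ↔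
      bld m n b (n - ℓ) j ≤ i ∧ i < bld m n b (n + 1 - ℓ) j := by
  have h1 := GPentry_ge_iff m n b i j hℓ1 (by omega)
  have h2 := GPentry_ge_iff m n b i j (ℓ := ℓ + 1) (by omega) (by omega)
  have h3 : n + 1 - (ℓ + 1) = n - ℓ := by omega
  rw [h3] at h2
  have h4 := GPentry_le_n m n b i j
  omega

/-- The tableau built from bottom-row data `b`. -/
def GP (m n : ℕ) (b : Fin n → Fin m) : PlanePartition where
  entry := GPentry m n b
  finite_support := by
    apply Set.Finite.subset ((Set.finite_Iio m).prod (Set.finite_Iio n))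
    rintro ⟨i, j⟩ hij
    simp only [Function.mem_support] at hij
    constructor
    · by_contra hi
      simp only [Set.mem_Iio, not_lt] at hi
      apply hij
      unfold GPentry
      rw [Finset.card_eq_zero, Finset.filter_eq_empty_iff]
      intro t ht
      have := (bld_inv m n b (n - t) (by omega)).2.1 j
      omega
    · by_contra hj
      simp only [Set.mem_Iio, not_lt] at hj
      apply hij
      unfold GPentry
      rw [Finset.card_eq_zero, Finset.filter_eq_empty_iff]
      intro t ht
      have := (bld_inv m n b (n - t) (by omega)).2.2 j (by omega)
      omega
  row_dec := by
    intro i j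
    apply Finset.card_le_card
    intro t ht
    simp only [Finset.mem_filter, Finset.mem_range] at ht ⊢
    exact ⟨ht.1, lt_of_lt_of_le ht.2
      ((bld_inv m n b (n - t) (by omega)).1 (Nat.le_succ j))⟩
  col_dec := by
    intro i j
    apply Finset.card_le_card
    intro t ht
    simp only [Finset.mem_filter, Finset.mem_range] at ht ⊢
    exact ⟨ht.1, by omega⟩

lemma GP_block (m n : ℕ) (b : Fin n → Fin m) {ℓ : ℕ} (hℓ1 : 1 ≤ ℓ) (hℓ2 : ℓ ≤ n) :
    ∃ js, bld m n b (n - ℓ) js ≤ (b ⟨ℓ - 1, by omega⟩ : Fin m).1 ∧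
      (∀ i j, GPentry m n b i j = ℓ ↔
        j = js ∧ bld m n b (n - ℓ) js ≤ i ∧ i ≤ (b ⟨ℓ - 1, by omega⟩ : Fin m).1) := by
  set k := n - ℓ with hk
  have hkn : k < n := by omega
  obtain ⟨hanti, hlem, hzero⟩ := bld_inv m n b k (by omega)
  have hbv : (b ⟨n - 1 - k, by omega⟩ : Fin m) = b ⟨ℓ - 1, by omega⟩ := by
    congr 1
    exact Fin.ext (by simp; omega)
  set bv := ((b ⟨ℓ - 1, by omega⟩ : Fin m).1) with hbvdef
  have hwk : bld m n b k k ≤ bv := by rw [hzero k le_rfl]; exact Nat.zero_le _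
  obtain ⟨js, hjsk, hjs, hjsmin, hjseq, hjsne⟩ := insC_spec (bld m n b k) bv k hwk
  have hstep : bld m n b (k + 1) = insC (bld m n b k) bv := by
    show (if hk : k < n then _ else _) = _
    rw [dif_pos hkn, hbv]
  have hk1 : n + 1 - ℓ = k + 1 := by omega
  refine ⟨js, hjs, ?_⟩
  intro i j
  rw [GPentry_val_iff m n b i j hℓ1 hℓ2, hk1, ← hk, hstep]
  by_cases h1 : j = js
  · subst h1
    rw [hjseq]
    constructor
    · rintro ⟨ha, hb⟩; exact ⟨rfl, ha, by omega⟩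
    · rintro ⟨-, ha, hb⟩; exact ⟨ha, by omega⟩
  · rw [hjsne _ h1]
    constructor
    · rintro ⟨ha, hb⟩; omega
    · rintro ⟨hc, -, -⟩; exact absurd hc h1

lemma GP_colCount (m n : ℕ) (b : Fin n → Fin m) {ℓ : ℕ} (hℓ1 : 1 ≤ ℓ) (hℓ2 : ℓ ≤ n) :
    colCount (GP m n b) ℓ = 1 := by
  obtain ⟨js, hjs, hblock⟩ := GP_block m n b hℓ1 hℓ2
  have hset : {j | ∃ i, (GP m n b).entry i j = ℓ} = {js} := by
    ext j
    simp only [Set.mem_setOf_eq, Set.mem_singleton_iff]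
    constructor
    · rintro ⟨i, hi⟩
      exact ((hblock i j).mp hi).1
    · rintro rfl
      exact ⟨(b ⟨ℓ - 1, by omega⟩ : Fin m).1, (hblock _ _).mpr ⟨rfl, hjs, le_rfl⟩⟩
  unfold colCount
  rw [hset]
  exact Set.ncard_singleton js

/-- The bottom row of the (unique) block of entries equal to `ℓ`. -/
noncomputable def bot (π : PlanePartition) (ℓ : ℕ) : ℕ :=
  sSup {i | ∃ j, π.entry i j = ℓ}

lemma GP_bot (m n : ℕ) (b : Fin n → Fin m) {ℓ : ℕ} (hℓ1 : 1 ≤ ℓ) (hℓ2 : ℓ ≤ n) :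
    bot (GP m n b) ℓ = (b ⟨ℓ - 1, by omega⟩ : Fin m).1 := by
  obtain ⟨js, hjs, hblock⟩ := GP_block m n b hℓ1 hℓ2
  set bv := ((b ⟨ℓ - 1, by omega⟩ : Fin m).1) with hbvdef
  have hmem : bv ∈ {i | ∃ j, (GP m n b).entry i j = ℓ} :=
    ⟨js, (hblock bv js).mpr ⟨rfl, hjs, le_rfl⟩⟩
  have hub : ∀ x ∈ {i | ∃ j, (GP m n b).entry i j = ℓ}, x ≤ bv := by
    rintro x ⟨j, hj⟩
    exact ((hblock x j).mp hj).2.2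
  exact le_antisymm (csSup_le ⟨bv, hmem⟩ hub) (le_csSup ⟨bv, hub⟩ hmem)

/-- Column heights of the diagram of entries `≥ ℓ`. -/
def htT (π : PlanePartition) (m ℓ j : ℕ) : ℕ :=
  ((Finset.range m).filter (fun i => ℓ ≤ π.entry i j)).card

lemma ht_iff (π : PlanePartition) {m : ℕ} (hm : ∀ i j, m ≤ i → π.entry i j = 0)
    {ℓ : ℕ} (hℓ : 1 ≤ ℓ) (i j : ℕ) :
    ℓ ≤ π.entry i j ↔ i < htT π m ℓ j := by
  have hdc : ∀ a c, a ≤ c →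
      c ∈ (Finset.range m).filter (fun i => ℓ ≤ π.entry i j) →
      a ∈ (Finset.range m).filter (fun i => ℓ ≤ π.entry i j) := by
    intro a c hac hcmem
    simp only [Finset.mem_filter, Finset.mem_range] at hcmem ⊢
    exact ⟨by omega, le_trans hcmem.2 (entry_anti_col π j hac)⟩
  have key := downset_iff hdc i
  simp only [Finset.mem_filter, Finset.mem_range] at key
  unfold htT
  constructor
  · intro h
    have him : i < m := by
      by_contra hi
      have := hm i j (by omega)
      omega
    exact key.mp ⟨him, h⟩
  · intro h
    exact (key.mpr h).2

lemma col_exists (π : PlanePartition) {ℓ : ℕ} (hc : colCount π ℓ = 1) :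
    ∃ j0, (∀ i j, π.entry i j = ℓ → j = j0) ∧ (∃ i, π.entry i j0 = ℓ) := by
  obtain ⟨j0, hj0⟩ := Set.ncard_eq_one.mp hc
  refine ⟨j0, ?_, ?_⟩
  · intro i j h
    have : j ∈ {j | ∃ i, π.entry i j = ℓ} := ⟨i, h⟩
    rw [hj0] at this
    exact this
  · have : j0 ∈ ({j0} : Set ℕ) := rfl
    rw [← hj0] at this
    exact this

lemma ht_step (π : PlanePartition) {m : ℕ} (hm : ∀ i j, m ≤ i → π.entry i j = 0)
    {ℓ : ℕ} (hℓ : 1 ≤ ℓ) (hc : colCount π ℓ = 1) :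
    (fun j => htT π m ℓ j) = insC (fun j => htT π m (ℓ + 1) j) (bot π ℓ) := by
  obtain ⟨j0, huniq, i0, hi0⟩ := col_exists π hc
  set Sr := {i | ∃ j, π.entry i j = ℓ} with hSr
  have hbd : ∀ x ∈ Sr, x < m := by
    rintro x ⟨j, hj⟩
    by_contra hx
    have := hm x j (by omega)
    omega
  have hbdd : BddAbove Sr := ⟨m, fun x hx => le_of_lt (hbd x hx)⟩
  have hne : Sr.Nonempty := ⟨i0, j0, hi0⟩
  set B := bot π ℓ with hB
  have hBmem : B ∈ Sr := Nat.sSup_mem hne hbdd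
  obtain ⟨jB, hjB⟩ := hBmem
  have hjB0 : jB = j0 := huniq _ _ hjB
  have hBj0 : π.entry B j0 = ℓ := hjB0 ▸ hjB
  have hBmax : ∀ i j, π.entry i j = ℓ → i ≤ B := fun i j h => le_csSup hbdd ⟨j, h⟩
  -- fact (e)
  have he : htT π m ℓ j0 = B + 1 := by
    have h1 : B < htT π m ℓ j0 := (ht_iff π hm hℓ B j0).mp (le_of_eq hBj0.symm)
    have h2 : ¬ (B + 1 < htT π m ℓ j0) := by
      intro h
      have h3 : ℓ ≤ π.entry (B + 1) j0 := (ht_iff π hm hℓ (B + 1) j0).mpr h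
      have h4 : π.entry (B + 1) j0 ≤ ℓ := hBj0 ▸ π.col_dec B j0
      have h5 := hBmax (B + 1) j0 (by omega)
      omega
    omega
  -- fact (d)
  have hd : htT π m (ℓ + 1) j0 ≤ B := by
    by_contra h
    have h2 : ℓ + 1 ≤ π.entry B j0 :=
      (ht_iff π hm (ℓ := ℓ + 1) (by omega) B j0).mpr (by omega)
    omega
  -- fact (f)
  have hf : ∀ j < j0, B < htT π m (ℓ + 1) j := by
    intro j hj
    have h1 : ℓ ≤ π.entry B j := hBj0 ▸ entry_anti_row π B (le_of_lt hj)
    have h2 : π.entry B j ≠ ℓ := fun h => by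
      have := huniq B j h
      omega
    exact (ht_iff π hm (ℓ := ℓ + 1) (by omega) B j).mp (by omega)
  -- fact (c)
  have hcj : ∀ j, j ≠ j0 → htT π m ℓ j = htT π m (ℓ + 1) j := by
    intro j hj
    unfold htT
    apply congrArg
    apply Finset.filter_congr
    intro i hi
    constructor
    · intro h
      have : π.entry i j ≠ ℓ := fun h' => hj (huniq i j h')
      omega
    · omega
  obtain ⟨js, hjsle, hjs, hjsmin, hjseq, hjsne⟩ :=
    insC_spec (fun j => htT π m (ℓ + 1) j) B j0 hd
  have hjs' : htT π m (ℓ + 1) js ≤ B := hjs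
  have hjs0 : js = j0 := by
    rcases lt_or_eq_of_le hjsle with h | h
    · have h1 := hf js h
      omega
    · exact h
  subst hjs0
  funext j
  by_cases h1 : j = js
  · subst h1
    exact he.trans hjseq.symm
  · exact (hcj j h1).trans (hjsne j h1).symm

lemma bot_lt (π : PlanePartition) {m : ℕ} (hm : ∀ i j, m ≤ i → π.entry i j = 0)
    {ℓ : ℕ} (hℓ : 1 ≤ ℓ) (hc : colCount π ℓ = 1) : bot π ℓ < m := by
  obtain ⟨j0, huniq, i0, hi0⟩ := col_exists π hc
  have hbd : ∀ x ∈ {i | ∃ j, π.entry i j = ℓ}, x < m := by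
    rintro x ⟨j, hj⟩
    by_contra hx
    have := hm x j (by omega)
    omega
  have hbdd : BddAbove {i | ∃ j, π.entry i j = ℓ} := ⟨m, fun x hx => le_of_lt (hbd x hx)⟩
  have hne : Set.Nonempty {i | ∃ j, π.entry i j = ℓ} := ⟨i0, j0, hi0⟩
  exact hbd _ (Nat.sSup_mem hne hbdd)

lemma recon (π : PlanePartition) {m n : ℕ}
    (hm : ∀ i j, m ≤ i → π.entry i j = 0)
    (hn : ∀ i j, π.entry i j ≤ n)
    (hc : ∀ ℓ, 1 ≤ ℓ → ℓ ≤ n → colCount π ℓ = 1)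
    (bR : Fin n → Fin m) (hbR : ∀ t : Fin n, (bR t).1 = bot π (t.1 + 1)) :
    ∀ k, k ≤ n → (fun j => htT π m (n + 1 - k) j) = bld m n bR k := by
  intro k
  induction k with
  | zero =>
    intro _
    funext j
    show htT π m (n + 1 - 0) j = 0
    unfold htT
    rw [Finset.card_eq_zero, Finset.filter_eq_empty_iff]
    intro i _
    have := hn i j
    omega
  | succ k ih =>
    intro hk1
    have hkn : k < n := hk1
    have hstep : bld m n bR (k + 1) = insC (bld m n bR k) ((bR ⟨n - 1 - k, by omega⟩ : Fin m).1) := by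
      show (if hk : k < n then _ else _) = _
      rw [dif_pos hkn]
    have hbot : ((bR ⟨n - 1 - k, by omega⟩ : Fin m).1) = bot π (n - k) := by
      rw [hbR ⟨n - 1 - k, by omega⟩]
      congr 1
      show n - 1 - k + 1 = n - k
      omega
    have hht := ht_step π hm (ℓ := n - k) (by omega) (hc (n - k) (by omega) (by omega))
    have h1 : n - k + 1 = n + 1 - k := by omega
    have h2 : n + 1 - (k + 1) = n - k := by omega
    rw [hstep, hbot, h2, hht, h1, ih (by omega)]

lemma recon_entry (π : PlanePartition) {m n : ℕ}
    (hm : ∀ i j, m ≤ i → π.entry i j = 0)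
    (hn : ∀ i j, π.entry i j ≤ n)
    (hc : ∀ ℓ, 1 ≤ ℓ → ℓ ≤ n → colCount π ℓ = 1)
    (bR : Fin n → Fin m) (hbR : ∀ t : Fin n, (bR t).1 = bot π (t.1 + 1)) :
    π.entry = GPentry m n bR := by
  funext i j
  have h1 : ((Finset.range n).filter fun t => i < bld m n bR (n - t) j) =
      Finset.range (π.entry i j) := by
    ext a
    simp only [Finset.mem_filter, Finset.mem_range]
    constructor
    · rintro ⟨ha, hlt⟩
      have e1 : bld m n bR (n - a) j = htT π m (a + 1) j := by
        have h := congrFun (recon π hm hn hc bR hbR (n - a) (by omega)) j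
        rw [show n + 1 - (n - a) = a + 1 by omega] at h
        exact h.symm
      rw [e1] at hlt
      have := (ht_iff π hm (ℓ := a + 1) (by omega) i j).mpr hlt
      omega
    · intro ha'
      have ha : a < n := by have := hn i j; omega
      have e1 : bld m n bR (n - a) j = htT π m (a + 1) j := by
        have h := congrFun (recon π hm hn hc bR hbR (n - a) (by omega)) j
        rw [show n + 1 - (n - a) = a + 1 by omega] at h
        exact h.symm
      refine ⟨ha, ?_⟩
      rw [e1]
      exact (ht_iff π hm (ℓ := a + 1) (by omega) i j).mp (by omega)
  show π.entry i j = ((Finset.range n).filter fun t => i < bld m n bR (n - t) j).card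
  rw [h1, Finset.card_range]

lemma GPentry_zero (m n : ℕ) (b : Fin n → Fin m) {i : ℕ} (j : ℕ) (hi : m ≤ i) :
    GPentry m n b i j = 0 := by
  unfold GPentry
  rw [Finset.card_eq_zero, Finset.filter_eq_empty_iff]
  intro t ht
  have := (bld_inv m n b (n - t) (by omega)).2.1 j
  omega

end Stmt19

/-- `Σ_{λ ⊆ (n^m)} f_λ(n) = m^n`: the number of strict tableaux with
at most `m` rows and content `[n]` (each `ℓ ∈ [1,n]` appears in exactly one column,
all entries at most `n`) is `m^n`. -/
theorem stmt19 (m n : ℕ) :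
    Nat.card {π : PlanePartition //
        (∀ i j, m ≤ i → π.entry i j = 0) ∧
        (∀ i j, π.entry i j ≤ n) ∧
        (∀ ℓ, 1 ≤ ℓ → ℓ ≤ n → colCount π ℓ = 1)} = m ^ n := by
  classical
  have e : (Fin n → Fin m) ≃ {π : PlanePartition //
        (∀ i j, m ≤ i → π.entry i j = 0) ∧
        (∀ i j, π.entry i j ≤ n) ∧
        (∀ ℓ, 1 ≤ ℓ → ℓ ≤ n → colCount π ℓ = 1)} :=
    { toFun := fun b => ⟨Stmt19.GP m n b,
        fun i j hi => Stmt19.GPentry_zero m n b j hi,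
        fun i j => Stmt19.GPentry_le_n m n b i j,
        fun ℓ h1 h2 => Stmt19.GP_colCount m n b h1 h2⟩
      invFun := fun T t => ⟨Stmt19.bot T.1 (t.1 + 1),
        Stmt19.bot_lt T.1 T.2.1 (by omega)
          (T.2.2.2 (t.1 + 1) (by omega) (by have := t.2; omega))⟩
      left_inv := by
        intro b
        funext t
        apply Fin.ext
        show Stmt19.bot (Stmt19.GP m n b) (t.1 + 1) = (b t).1
        rw [Stmt19.GP_bot m n b (ℓ := t.1 + 1) (by omega) (by have := t.2; omega)]
        congr 1
      right_inv := by
        intro T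
        apply Subtype.ext
        apply Stmt19.pp_ext
        exact (Stmt19.recon_entry T.1 T.2.1 T.2.2.1 T.2.2.2 _ (fun t => rfl)).symm }
  calc Nat.card {π : PlanePartition //
        (∀ i j, m ≤ i → π.entry i j = 0) ∧
        (∀ i j, π.entry i j ≤ n) ∧
        (∀ ℓ, 1 ≤ ℓ → ℓ ≤ n → colCount π ℓ = 1)}
      = Nat.card (Fin n → Fin m) := Nat.card_congr e.symm
    _ = m ^ n := by
        rw [Nat.card_eq_fintype_card, Fintype.card_fun, Fintype.card_fin, Fintype.card_fin]
end
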